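/- arXiv:2011.08572 — 6 statements merged into one kernel-verified Lean document; each statement's English description precedes it below -/
import Mathlib

section
/- Let H_c be a k-local classical Hamiltonian on n bits with T terms in which each bit is acted on by at most k' terms, and let |ψ⟩ be its coherent Gibbs state. Then there exists a (k'(k−1)+1)-local stoquastic frustration-free Hamiltonian H_SFF on n qubits, a sum of n terms (one for each qubit, namely Γ_j − X_j where X_j is the Pauli X on qubit j and Γ_j = X_j e^(−H_c/2) X_j e^(H_c/2) with H_c viewed as a diagonal operator), whose unique ground state (up to phase) is |ψ⟩, with ground energy 0. -/
open scoped BigOperators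

namespace StoqPaper

/-- The real value (0 or 1) of a bit. -/
def bv (b : Bool) : ℝ := if b then 1 else 0

/-- The ℓ² norm of a finitely-indexed family of complex numbers. -/
noncomputable def l2norm {α : Type*} [Fintype α] (v : α → ℂ) : ℝ :=
  Real.sqrt (∑ x, Complex.normSq (v x))

/-- The inner product ⟨v|w⟩ (antilinear in the first slot). -/
noncomputable def qInner {α : Type*} [Fintype α] (v w : α → ℂ) : ℂ :=
  ∑ x, (starRingEnd ℂ) (v x) * w x

/-- `‖M‖_op ≤ J` for the ℓ²-operator norm, stated via its universal property. -/
def OpNormLE {α : Type*} [Fintype α] (M : Matrix α α ℂ) (J : ℝ) : Prop :=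
  ∀ v : α → ℂ, l2norm (M.mulVec v) ≤ J * l2norm v

/-- The uniform superposition state |+⟩ on qubits indexed by `ι`. -/
noncomputable def plusState (ι : Type*) [Fintype ι] : (ι → Bool) → ℂ :=
  fun _ => ((Real.sqrt (2 ^ Fintype.card ι) : ℝ)⁻¹ : ℝ)

variable {ι : Type*} [Fintype ι] [DecidableEq ι]

/-- A matrix on qubits indexed by `ι` acts nontrivially only on the qubit set `S`:
entries vanish unless the two configurations agree outside `S`, and entries depend
only on the restrictions of the two configurations to `S`. -/
def LocalOn (S : Finset ι) (M : Matrix (ι → Bool) (ι → Bool) ℂ) : Prop :=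
  (∀ x y : ι → Bool, (∃ i, i ∉ S ∧ x i ≠ y i) → M x y = 0) ∧
  (∀ x y x' y' : ι → Bool, (∀ i ∈ S, x i = x' i) → (∀ i ∈ S, y i = y' i) →
    (∀ i, i ∉ S → x i = y i) → (∀ i, i ∉ S → x' i = y' i) → M x y = M x' y')

/-- A matrix is `k`-local if it acts nontrivially on at most `k` qubits. -/
def KLocal (k : ℕ) (M : Matrix (ι → Bool) (ι → Bool) ℂ) : Prop :=
  ∃ S : Finset ι, S.card ≤ k ∧ LocalOn S M

/-- A `k`-local matrix all of whose local-matrix entries are real and strictly positive. -/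
def KLocalPositive (k : ℕ) (M : Matrix (ι → Bool) (ι → Bool) ℂ) : Prop :=
  ∃ S : Finset ι, S.card ≤ k ∧ LocalOn S M ∧
    ∀ x y : ι → Bool, (∀ i, i ∉ S → x i = y i) → (M x y).im = 0 ∧ 0 < (M x y).re

/-- Stoquastic entries: all entries real, and off-diagonal entries nonpositive. -/
def StoqEntries (M : Matrix (ι → Bool) (ι → Bool) ℂ) : Prop :=
  ∀ x y : ι → Bool, (M x y).im = 0 ∧ (x ≠ y → (M x y).re ≤ 0)

/-- `μ` is a (real) eigenvalue of `M`. -/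
def IsEig {α : Type*} [Fintype α] (M : Matrix α α ℂ) (μ : ℝ) : Prop :=
  ∃ v : α → ℂ, v ≠ 0 ∧ M.mulVec v = (μ : ℂ) • v

/-- `E` is the smallest (real) eigenvalue of `M` (the ground energy). -/
def IsGroundEnergy {α : Type*} [Fintype α] (M : Matrix α α ℂ) (E : ℝ) : Prop :=
  IsEig M E ∧ ∀ μ : ℝ, IsEig M μ → E ≤ μ

/-- Every eigenvalue of `M` is either the ground energy `E` or at least `E + Δ`:
the energy gap of `M` is at least `Δ`. -/
def GapAtLeast {α : Type*} [Fintype α] (M : Matrix α α ℂ) (E Δ : ℝ) : Prop :=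
  ∀ μ : ℝ, IsEig M μ → μ = E ∨ E + Δ ≤ μ

/-- `P` is the orthogonal projector onto the `E`-eigenspace of `M`:
it is Hermitian, idempotent, and its fixed space is exactly that eigenspace. -/
def IsGroundProjector {α : Type*} [Fintype α] (M P : Matrix α α ℂ) (E : ℝ) : Prop :=
  P.IsHermitian ∧ P * P = P ∧
    ∀ v : α → ℂ, M.mulVec v = (E : ℂ) • v ↔ P.mulVec v = v

/-- A function of bit configurations depends only on the bits in `S`. -/
def DependsOnlyOn (S : Finset ι) (f : (ι → Bool) → ℝ) : Prop :=
  ∀ y y' : ι → Bool, (∀ i ∈ S, y i = y' i) → f y = f y'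

/-- The Gibbs distribution (at temperature 1) of a classical Hamiltonian. -/
noncomputable def gibbs (Hc : (ι → Bool) → ℝ) (y : ι → Bool) : ℝ :=
  Real.exp (-(Hc y)) / ∑ z, Real.exp (-(Hc z))

/-- Total variation distance between two real functions on a finite set. -/
noncomputable def tvDist {α : Type*} [Fintype α] (p q : α → ℝ) : ℝ :=
  (1 / 2) * ∑ x, |p x - q x|

/-- A Hyper Boltzmann Machine with `n` visible nodes, `m` hidden nodes
and `T` hyperedges. -/
structure HBM (n m T : ℕ) where
  /-- the set of nodes of each hyperedge -/
  edge : Fin T → Finset (Fin n ⊕ Fin m)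
  /-- the local energy of each hyperedge -/
  F : Fin T → ((Fin n ⊕ Fin m) → Bool) → ℝ
  /-- each local energy depends only on the bits at the nodes of its hyperedge -/
  F_local : ∀ t, DependsOnlyOn (edge t) (F t)

namespace HBM

variable {n m T : ℕ}

/-- An HBM is `k`-local if every hyperedge contains at most `k` nodes. -/
def IsKLocal (M : HBM n m T) (k : ℕ) : Prop := ∀ t, (M.edge t).card ≤ k

/-- The number of hyperedges containing a given node. -/
def deg (M : HBM n m T) (v : Fin n ⊕ Fin m) : ℕ :=
  (Finset.univ.filter (fun t => v ∈ M.edge t)).card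

/-- The output of the HBM: hidden variables summed out of the Boltzmann weight. -/
noncomputable def output (M : HBM n m T) (x : Fin n → Bool) : ℝ :=
  ∑ h : Fin m → Bool, Real.exp (-(∑ t, M.F t (Sum.elim x h)))

/-- The probability distribution of the HBM on visible configurations. -/
noncomputable def dist (M : HBM n m T) (x : Fin n → Bool) : ℝ :=
  M.output x / ∑ y, M.output y

/-- The HBM represents the state `ψ` to precision `ε` in distribution. -/
noncomputable def RepDist (M : HBM n m T) (ψ : (Fin n → Bool) → ℂ) (ε : ℝ) : Prop :=
  tvDist M.dist (fun x => Complex.normSq (ψ x)) ≤ ε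

end HBM

/-- A Deep Boltzmann Machine with `n` visible nodes, `m₁` middle-layer hidden nodes and
`m₂` deep-layer hidden nodes; edges run only between consecutive layers. -/
structure DBM (n m₁ m₂ : ℕ) where
  /-- biases of the visible nodes -/
  a : Fin n → ℝ
  /-- biases of the middle hidden nodes -/
  b : Fin m₁ → ℝ
  /-- biases of the deep hidden nodes -/
  c : Fin m₂ → ℝ
  /-- weights between visible and middle layers -/
  W : Fin n → Fin m₁ → ℝ
  /-- weights between middle and deep layers -/
  U : Fin m₁ → Fin m₂ → ℝ

namespace DBM

variable {n m₁ m₂ : ℕ}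

/-- The energy of a configuration of a DBM. -/
noncomputable def energy (D : DBM n m₁ m₂) (x : Fin n → Bool) (h : Fin m₁ → Bool)
    (g : Fin m₂ → Bool) : ℝ :=
  -(∑ i, D.a i * bv (x i)) - (∑ j, D.b j * bv (h j)) - (∑ l, D.c l * bv (g l))
    - (∑ i, ∑ j, D.W i j * bv (x i) * bv (h j))
    - (∑ j, ∑ l, D.U j l * bv (h j) * bv (g l))

/-- The output of a DBM. -/
noncomputable def output (D : DBM n m₁ m₂) (x : Fin n → Bool) : ℝ :=
  ∑ h : Fin m₁ → Bool, ∑ g : Fin m₂ → Bool, Real.exp (-(D.energy x h g))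

/-- The probability distribution of a DBM on visible configurations. -/
noncomputable def dist (D : DBM n m₁ m₂) (x : Fin n → Bool) : ℝ :=
  D.output x / ∑ y, D.output y

open Classical in
/-- The number of connections (degree) of a visible node. -/
noncomputable def degVis (D : DBM n m₁ m₂) (i : Fin n) : ℕ :=
  (Finset.univ.filter (fun j => D.W i j ≠ 0)).card

open Classical in
/-- The number of connections (degree) of a middle-layer hidden node. -/
noncomputable def degMid (D : DBM n m₁ m₂) (j : Fin m₁) : ℕ :=
  (Finset.univ.filter (fun i => D.W i j ≠ 0)).card
    + (Finset.univ.filter (fun l => D.U j l ≠ 0)).card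

open Classical in
/-- The number of connections (degree) of a deep-layer hidden node. -/
noncomputable def degDeep (D : DBM n m₁ m₂) (l : Fin m₂) : ℕ :=
  (Finset.univ.filter (fun j => D.U j l ≠ 0)).card

end DBM

/-- A (general) Boltzmann machine on `n` visible and `m` hidden nodes: a graph with
real biases on the nodes and real weights on the edges. -/
structure BM (n m : ℕ) where
  /-- biases -/
  a : (Fin n ⊕ Fin m) → ℝ
  /-- weights (zero weight = no edge) -/
  W : (Fin n ⊕ Fin m) → (Fin n ⊕ Fin m) → ℝ
  /-- weights are symmetric -/
  symm : ∀ u v, W u v = W v u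
  /-- no self-loops -/
  diag : ∀ u, W u u = 0

namespace BM

variable {n m : ℕ}

/-- The energy of a configuration of a Boltzmann machine. -/
noncomputable def energy (B : BM n m) (y : (Fin n ⊕ Fin m) → Bool) : ℝ :=
  -(∑ v, B.a v * bv (y v)) - (1 / 2) * ∑ u, ∑ v, B.W u v * bv (y u) * bv (y v)

/-- The output of a Boltzmann machine. -/
noncomputable def output (B : BM n m) (x : Fin n → Bool) : ℝ :=
  ∑ h : Fin m → Bool, Real.exp (-(B.energy (Sum.elim x h)))

/-- The probability distribution of a Boltzmann machine on visible configurations. -/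
noncomputable def dist (B : BM n m) (x : Fin n → Bool) : ℝ :=
  B.output x / ∑ y, B.output y

open Classical in
/-- The number of connections (degree) of a node. -/
noncomputable def deg (B : BM n m) (v : Fin n ⊕ Fin m) : ℕ :=
  (Finset.univ.filter (fun u => B.W v u ≠ 0)).card

end BM

end StoqPaper

namespace StoqPaper

/-- The bound `η^(−1/2) L^(5/2) J^(3/2) Δ^(−3/2) ε^(−1/2) (log(η⁻¹ε⁻¹))^(3/2)` appearing in the
theorems about general stoquastic Hamiltonians. -/
noncomputable def stoqBound (η L J Δ ε : ℝ) : ℝ :=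
  η ^ (-(1 : ℝ) / 2) * L ^ ((5 : ℝ) / 2) * J ^ ((3 : ℝ) / 2) * Δ ^ (-(3 : ℝ) / 2) *
    ε ^ (-(1 : ℝ) / 2) * Real.log (η⁻¹ * ε⁻¹) ^ ((3 : ℝ) / 2)

/-- The bound `L³ J Δ⁻¹ log(η⁻¹ε⁻¹)` appearing in the theorems about stoquastic
frustration-free Hamiltonians. -/
noncomputable def sffBound (L J Δ η ε : ℝ) : ℝ :=
  L ^ (3 : ℕ) * J * Δ⁻¹ * Real.log (η⁻¹ * ε⁻¹)

/-- The marginal of a distribution on `n + m` bits onto the first `n` bits. -/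
noncomputable def marginalFst {n m : ℕ} (p : ((Fin n ⊕ Fin m) → Bool) → ℝ)
    (x : Fin n → Bool) : ℝ :=
  ∑ h : Fin m → Bool, p (Sum.elim x h)

end StoqPaper

/-!
Let `ψ = e^{-H_c/2}/√Z > 0` and write `x ⊕ j` for `x` with bit `j` flipped. Then
`Γ_j = diag(ψ(x ⊕ j)/ψ(x))`, so each term `Γ_j - X_j` is the "parent term" of the positive
vector `ψ` for the involution `x ↦ x ⊕ j`. For a positive `φ` and an involution `f` with
permutation matrix `P_f`, symmetrising over the pairs `{x, f x}` gives
`2 Re⟨v, (diag(φ∘f/φ) - P_f) v⟩ = ∑ₓ φ(x) φ(f x) |v(x)/φ(x) - v(f x)/φ(f x)|²`.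
Hence every term is positive semidefinite and kills `ψ`, and a vector killed by the sum has
zero energy for each term, so `v/ψ` is invariant under every single bit flip and therefore
constant. Locality: `H_c(x) - H_c(x ⊕ j)` involves only the at most `k'` terms acting on bit `j`,
hence only `j` and at most `k - 1` further bits of each of them.
-/

namespace StoqPaper

open Matrix

section QuadraticForm

variable {α : Type*} [Fintype α]

theorem qInner_eq_star_dotProduct (v w : α → ℂ) : qInner v w = star v ⬝ᵥ w := rfl

theorem re_qInner_smul_self (μ : ℝ) (v : α → ℂ) :
    (qInner v ((μ : ℂ) • v)).re = μ * ∑ x, Complex.normSq (v x) := by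
  simp only [qInner, Pi.smul_apply, smul_eq_mul, Complex.re_sum, Finset.mul_sum]
  refine Finset.sum_congr rfl fun x _ => ?_
  rw [mul_left_comm, Complex.re_ofReal_mul, mul_comm (starRingEnd ℂ _), Complex.mul_conj,
    Complex.ofReal_re]

theorem nonneg_of_isEig {M : Matrix α α ℂ} (hM : ∀ v, 0 ≤ (qInner v (M *ᵥ v)).re) {μ : ℝ}
    (hμ : IsEig M μ) : 0 ≤ μ := by
  obtain ⟨v, hv, hMv⟩ := hμ
  obtain ⟨x₀, hx₀⟩ := Function.ne_iff.mp hv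
  have hnorm : 0 < ∑ x, Complex.normSq (v x) :=
    Finset.sum_pos' (fun _ _ => Complex.normSq_nonneg _)
      ⟨x₀, Finset.mem_univ _, Complex.normSq_pos.mpr hx₀⟩
  have := hM v
  rw [hMv, re_qInner_smul_self] at this
  exact nonneg_of_mul_nonneg_left this hnorm

theorem isGroundEnergy_zero {M : Matrix α α ℂ} (hM : ∀ v, 0 ≤ (qInner v (M *ᵥ v)).re)
    {v : α → ℂ} (hv : v ≠ 0) (hMv : M *ᵥ v = 0) : IsGroundEnergy M 0 :=
  ⟨⟨v, hv, by rw [hMv, Complex.ofReal_zero, zero_smul]⟩, fun _ => nonneg_of_isEig hM⟩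

theorem re_qInner_sum_mulVec {ι : Type*} (s : Finset ι) (M : ι → Matrix α α ℂ) (v : α → ℂ) :
    (qInner v ((∑ j ∈ s, M j) *ᵥ v)).re = ∑ j ∈ s, (qInner v (M j *ᵥ v)).re := by
  simp only [qInner_eq_star_dotProduct, sum_mulVec, dotProduct_sum, Complex.re_sum]

theorem re_qInner_eq_zero_of_sum_mulVec_eq_zero {ι : Type*} (s : Finset ι)
    {M : ι → Matrix α α ℂ} (hM : ∀ j ∈ s, ∀ v, 0 ≤ (qInner v (M j *ᵥ v)).re) {v : α → ℂ}
    (hv : (∑ j ∈ s, M j) *ᵥ v = 0) : ∀ j ∈ s, (qInner v (M j *ᵥ v)).re = 0 := by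
  have h0 : (qInner v ((∑ j ∈ s, M j) *ᵥ v)).re = 0 := by
    rw [hv, qInner_eq_star_dotProduct, dotProduct_zero, Complex.zero_re]
  rw [re_qInner_sum_mulVec] at h0
  exact (Finset.sum_eq_zero_iff_of_nonneg fun j hj => hM j hj v).mp h0

end QuadraticForm

section ParentTerm

variable {α : Type*} [DecidableEq α]

noncomputable def parentTerm (f : α → α) (φ : α → ℝ) : Matrix α α ℂ :=
  diagonal (fun x => ((φ (f x) / φ x : ℝ) : ℂ)) - of (fun x y => if y = f x then 1 else 0)

theorem parentTerm_isHermitian {f : α → α} (hf : Function.Involutive f) (φ : α → ℝ) :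
    (parentTerm f φ).IsHermitian := by
  have hflip : ∀ x y, (x = f y) ↔ (y = f x) := fun x y =>
    ⟨fun h => h ▸ (hf y).symm, fun h => h ▸ (hf x).symm⟩
  ext x y
  by_cases hxy : x = y
  · subst hxy
    simp [parentTerm]
  · simp [parentTerm, diagonal_apply_ne _ hxy, diagonal_apply_ne _ (Ne.symm hxy), hflip x y,
      apply_ite]

variable [Fintype α]

theorem parentTerm_mulVec_apply (f : α → α) (φ : α → ℝ) (v : α → ℂ) (x : α) :
    (parentTerm f φ *ᵥ v) x = (φ (f x) / φ x : ℝ) * v x - v (f x) := by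
  rw [parentTerm, sub_mulVec, Pi.sub_apply, mulVec_diagonal]
  simp [mulVec, dotProduct, ite_mul]

theorem parentTerm_mulVec_self {φ : α → ℝ} (hφ : ∀ x, φ x ≠ 0) (f : α → α) :
    parentTerm f φ *ᵥ (fun x => (φ x : ℂ)) = 0 := by
  funext x
  rw [parentTerm_mulVec_apply, ← Complex.ofReal_mul, div_mul_cancel₀ _ (hφ x), sub_self,
    Pi.zero_apply]

theorem two_mul_re_qInner_parentTerm {f : α → α} (hf : Function.Involutive f) {φ : α → ℝ}
    (hφ : ∀ x, φ x ≠ 0) (v : α → ℂ) :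
    2 * (qInner v (parentTerm f φ *ᵥ v)).re =
      ∑ x, φ x * φ (f x) * Complex.normSq (v x / φ x - v (f x) / φ (f x)) := by
  set w : α → ℂ := fun x => v x / φ x
  have hv : ∀ x, v x = φ x * w x := fun x =>
    (mul_div_cancel₀ _ (Complex.ofReal_ne_zero.mpr (hφ x))).symm
  have hterm : ∀ x, ((starRingEnd ℂ) (v x) * (parentTerm f φ *ᵥ v) x).re =
      φ x * φ (f x) * (Complex.normSq (w x) - (w x * (starRingEnd ℂ) (w (f x))).re) := by
    intro x
    rw [parentTerm_mulVec_apply, hv x, hv (f x)]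
    simp only [Complex.normSq_apply, map_mul, Complex.conj_ofReal, Complex.mul_re,
      Complex.mul_im, Complex.sub_re, Complex.sub_im, Complex.ofReal_re, Complex.ofReal_im,
      Complex.conj_re, Complex.conj_im]
    field_simp [hφ x]
    ring
  have hswap : ∑ x, φ x * φ (f x) * Complex.normSq (w (f x)) =
      ∑ x, φ x * φ (f x) * Complex.normSq (w x) := by
    refine (Equiv.sum_comp (hf.toPerm f) _).symm.trans (Finset.sum_congr rfl fun x _ => ?_)
    simp only [Function.Involutive.coe_toPerm, hf x, mul_comm (φ (f x))]
  show _ = ∑ x, φ x * φ (f x) * Complex.normSq (w x - w (f x))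
  simp only [qInner, Complex.re_sum, hterm, Complex.normSq_sub, mul_add, mul_sub,
    Finset.sum_add_distrib, Finset.sum_sub_distrib, hswap, mul_left_comm _ (2 : ℝ),
    ← Finset.mul_sum]
  ring

theorem re_qInner_parentTerm_nonneg {f : α → α} (hf : Function.Involutive f) {φ : α → ℝ}
    (hφ : ∀ x, 0 < φ x) (v : α → ℂ) : 0 ≤ (qInner v (parentTerm f φ *ᵥ v)).re := by
  have hsq : 0 ≤ ∑ x, φ x * φ (f x) * Complex.normSq (v x / φ x - v (f x) / φ (f x)) :=
    Finset.sum_nonneg fun x _ => mul_nonneg (mul_pos (hφ x) (hφ (f x))).le (Complex.normSq_nonneg _)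
  linarith [two_mul_re_qInner_parentTerm hf (fun x => (hφ x).ne') v]

theorem div_apply_eq_of_re_qInner_parentTerm_eq_zero {f : α → α} (hf : Function.Involutive f)
    {φ : α → ℝ} (hφ : ∀ x, 0 < φ x) {v : α → ℂ} (hv : (qInner v (parentTerm f φ *ᵥ v)).re = 0)
    (x : α) : v (f x) / φ (f x) = v x / φ x := by
  have hsum := two_mul_re_qInner_parentTerm hf (fun x => (hφ x).ne') v
  rw [hv, mul_zero, eq_comm, Finset.sum_eq_zero_iff_of_nonneg fun x _ =>
    mul_nonneg (mul_pos (hφ x) (hφ (f x))).le (Complex.normSq_nonneg _)] at hsum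
  have hx := (mul_eq_zero.mp (hsum x (Finset.mem_univ x))).resolve_left
    (mul_pos (hφ x) (hφ (f x))).ne'
  exact (sub_eq_zero.mp (Complex.normSq_eq_zero.mp hx)).symm

theorem stoqEntries_parentTerm {ι : Type*} [Fintype ι] [DecidableEq ι]
    (f : (ι → Bool) → ι → Bool) (φ : (ι → Bool) → ℝ) : StoqEntries (parentTerm f φ) := by
  intro x y
  by_cases hxy : x = y
  · subst hxy
    simp only [parentTerm, Matrix.sub_apply, diagonal_apply_eq, of_apply]
    split_ifs <;> simp
  · simp only [parentTerm, Matrix.sub_apply, diagonal_apply_ne _ hxy, of_apply]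
    split_ifs <;> simp

end ParentTerm

section BitFlip

variable {ι : Type*} [DecidableEq ι]

def flipBit (j : ι) (x : ι → Bool) : ι → Bool := Function.update x j (!x j)

theorem flipBit_apply_of_ne {i j : ι} (h : i ≠ j) (x : ι → Bool) : flipBit j x i = x i :=
  Function.update_of_ne h _ _

theorem flipBit_involutive (j : ι) : Function.Involutive (flipBit j) := fun x => by
  simp [flipBit]

theorem update_eq_self_or_flipBit (x : ι → Bool) (j : ι) (b : Bool) :
    Function.update x j b = x ∨ Function.update x j b = flipBit j x := by
  by_cases h : b = x j
  · exact Or.inl (Function.update_eq_self_iff.mpr h)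
  · exact Or.inr (congrArg (Function.update x j) (Bool.eq_not_iff.mpr h))

theorem flipBit_agree {s : Finset ι} {x x' : ι → Bool} (h : ∀ i ∈ s, x i = x' i) (j : ι) :
    ∀ i ∈ s, flipBit j x i = flipBit j x' i := fun i hi => by
  by_cases hij : i = j
  · subst hij
    simp [flipBit, h i hi]
  · rw [flipBit_apply_of_ne hij, flipBit_apply_of_ne hij, h i hi]

theorem DependsOnlyOn.apply_flipBit {s : Finset ι} {g : (ι → Bool) → ℝ}
    (hg : DependsOnlyOn s g) {j : ι} (hj : j ∉ s) (x : ι → Bool) : g (flipBit j x) = g x :=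
  hg _ _ fun i hi => flipBit_apply_of_ne (by rintro rfl; exact hj hi) x

theorem eq_of_flipBit_invariant [Fintype ι] {β : Type*} {w : (ι → Bool) → β}
    (hw : ∀ j x, w (flipBit j x) = w x) (x y : ι → Bool) : w x = w y := by
  suffices ∀ s : Finset ι, ∀ x, (∀ i ∉ s, x i = y i) → w x = w y from
    this Finset.univ x fun i hi => absurd (Finset.mem_univ i) hi
  intro s
  induction s using Finset.induction_on with
  | empty => exact fun x hx => congrArg w (funext fun i => hx i (Finset.notMem_empty i))
  | insert a s _ ih =>
    intro x hx
    have hupdate : w (Function.update x a (y a)) = w x := by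
      rcases update_eq_self_or_flipBit x a (y a) with h | h <;> rw [h]
      exact hw a x
    rw [← hupdate]
    refine ih _ fun i hi => ?_
    by_cases hia : i = a
    · subst hia
      exact Function.update_self i _ x
    · rw [Function.update_of_ne hia]
      exact hx i (by simp [hia, hi])

theorem eq_iff_eq_of_agree {s : Finset ι} {x y x' y' : ι → Bool} (hx : ∀ i ∈ s, x i = x' i)
    (hy : ∀ i ∈ s, y i = y' i) (hxy : ∀ i ∉ s, x i = y i) (hxy' : ∀ i ∉ s, x' i = y' i) :
    x = y ↔ x' = y' := by
  constructor <;> intro h <;> funext i <;> by_cases hi : i ∈ s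
  · rw [← hx i hi, ← hy i hi, h]
  · exact hxy' i hi
  · rw [hx i hi, hy i hi, h]
  · exact hxy i hi

variable [Fintype ι]

theorem localOn_parentTerm_flipBit {s : Finset ι} {j : ι} (hj : j ∈ s) {φ : (ι → Bool) → ℝ}
    (hφ : DependsOnlyOn s fun x => φ (flipBit j x) / φ x) :
    LocalOn s (parentTerm (flipBit j) φ) := by
  have hflip_out : ∀ x, ∀ i ∉ s, flipBit j x i = x i := fun x i hi =>
    flipBit_apply_of_ne (by rintro rfl; exact hi hj) x
  constructor
  · rintro x y ⟨i, hi, hxy⟩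
    have hne : x ≠ y := fun h => hxy (h ▸ rfl)
    have hne' : y ≠ flipBit j x := fun h => hxy (by rw [h, hflip_out x i hi])
    simp [parentTerm, diagonal_apply_ne _ hne, hne']
  · intro x y x' y' hx hy hxy hxy'
    have hdiag := eq_iff_eq_of_agree hx hy hxy hxy'
    have hoff : y = flipBit j x ↔ y' = flipBit j x' :=
      eq_iff_eq_of_agree hy (flipBit_agree hx j) (fun i hi => (hxy i hi).symm.trans
        (hflip_out x i hi).symm) (fun i hi => (hxy' i hi).symm.trans (hflip_out x' i hi).symm)
    simp only [parentTerm, Matrix.sub_apply, diagonal_apply, of_apply, hoff]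
    by_cases h : x = y
    · have hratio : φ (flipBit j x) / φ x = φ (flipBit j x') / φ x' := hφ x x' hx
      rw [if_pos h, if_pos (hdiag.mp h), hratio]
    · rw [if_neg h, if_neg (mt hdiag.mpr h)]

theorem exists_eq_smul_of_sum_parentTerm_flipBit_mulVec_eq_zero {φ : (ι → Bool) → ℝ}
    (hφ : ∀ x, 0 < φ x) {v : (ι → Bool) → ℂ} (hv : (∑ j, parentTerm (flipBit j) φ) *ᵥ v = 0) :
    ∃ c : ℂ, v = c • fun x => (φ x : ℂ) := by
  have hzero := re_qInner_eq_zero_of_sum_mulVec_eq_zero Finset.univ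
    (fun j _ => re_qInner_parentTerm_nonneg (flipBit_involutive j) hφ) hv
  have hconst := eq_of_flipBit_invariant (w := fun x => v x / φ x) fun j =>
    div_apply_eq_of_re_qInner_parentTerm_eq_zero (flipBit_involutive j) hφ
      (hzero j (Finset.mem_univ j))
  refine ⟨v (fun _ => false) / φ (fun _ => false), funext fun x => ?_⟩
  rw [Pi.smul_apply, smul_eq_mul, ← hconst x,
    div_mul_cancel₀ _ (Complex.ofReal_ne_zero.mpr (hφ x).ne')]

end BitFlip

section Interaction

variable {ι β : Type*} [DecidableEq ι] [Fintype β]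

def interactionNbhd (S : β → Finset ι) (j : ι) : Finset ι :=
  insert j ((Finset.univ.filter fun b => j ∈ S b).biUnion fun b => (S b).erase j)

theorem subset_interactionNbhd {S : β → Finset ι} {j : ι} {b : β} (hb : j ∈ S b) :
    S b ⊆ interactionNbhd S j := by
  intro i hi
  by_cases hij : i = j
  · exact hij ▸ Finset.mem_insert_self _ _
  · exact Finset.mem_insert_of_mem (Finset.mem_biUnion.mpr
      ⟨b, Finset.mem_filter.mpr ⟨Finset.mem_univ b, hb⟩, Finset.mem_erase.mpr ⟨hij, hi⟩⟩)

theorem card_interactionNbhd_le {S : β → Finset ι} {k k' : ℕ} (hcard : ∀ b, (S b).card ≤ k)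
    {j : ι} (hdeg : (Finset.univ.filter fun b => j ∈ S b).card ≤ k') :
    (interactionNbhd S j).card ≤ k' * (k - 1) + 1 := by
  calc (interactionNbhd S j).card
      ≤ ((Finset.univ.filter fun b => j ∈ S b).biUnion fun b => (S b).erase j).card + 1 :=
        Finset.card_insert_le _ _
    _ ≤ (∑ b ∈ Finset.univ.filter fun b => j ∈ S b, ((S b).erase j).card) + 1 := by
        gcongr
        exact Finset.card_biUnion_le
    _ ≤ (Finset.univ.filter fun b => j ∈ S b).card * (k - 1) + 1 := by
        gcongr
        refine Finset.sum_le_card_nsmul _ _ _ fun b hb => ?_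
        rw [Finset.card_erase_of_mem (Finset.mem_filter.mp hb).2]
        exact Nat.sub_le_sub_right (hcard b) 1
    _ ≤ k' * (k - 1) + 1 := by gcongr

theorem dependsOnlyOn_sum_sub_flipBit {S : β → Finset ι} {h : β → (ι → Bool) → ℝ}
    (hdep : ∀ b, DependsOnlyOn (S b) (h b)) (j : ι) :
    DependsOnlyOn (interactionNbhd S j) fun x => ∑ b, (h b x - h b (flipBit j x)) := by
  intro x x' hx
  refine Finset.sum_congr rfl fun b _ => ?_
  by_cases hb : j ∈ S b
  · have hx_b : ∀ i ∈ S b, x i = x' i := fun i hi => hx i (subset_interactionNbhd hb hi)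
    rw [hdep b x x' hx_b, hdep b _ _ (flipBit_agree hx_b j)]
  · rw [(hdep b).apply_flipBit hb, (hdep b).apply_flipBit hb, sub_self, sub_self]

end Interaction

section CoherentGibbs

variable {α : Type*} [Fintype α]

noncomputable def coherentGibbs (Hc : α → ℝ) (x : α) : ℝ :=
  Real.exp (-(Hc x) / 2) / Real.sqrt (∑ y, Real.exp (-(Hc y)))

theorem coherentGibbs_pos [Nonempty α] (Hc : α → ℝ) (x : α) : 0 < coherentGibbs Hc x :=
  div_pos (Real.exp_pos _) (Real.sqrt_pos.mpr
    (Finset.sum_pos (fun _ _ => Real.exp_pos _) Finset.univ_nonempty))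

theorem coherentGibbs_div_coherentGibbs [Nonempty α] (Hc : α → ℝ) (x y : α) :
    coherentGibbs Hc y / coherentGibbs Hc x = Real.exp ((Hc x - Hc y) / 2) := by
  rw [coherentGibbs, coherentGibbs, div_div_div_cancel_right₀ (by positivity), ← Real.exp_sub]
  ring_nf

theorem dependsOnlyOn_coherentGibbs_flipBit_div {ι β : Type*} [Fintype ι] [DecidableEq ι]
    [Fintype β] {S : β → Finset ι} {h : β → (ι → Bool) → ℝ}
    (hdep : ∀ b, DependsOnlyOn (S b) (h b)) (j : ι) :
    DependsOnlyOn (interactionNbhd S j) fun x =>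
      coherentGibbs (fun y => ∑ b, h b y) (flipBit j x) /
        coherentGibbs (fun y => ∑ b, h b y) x := by
  intro x x' hx
  have hdiff := dependsOnlyOn_sum_sub_flipBit hdep j x x' hx
  simp only [coherentGibbs_div_coherentGibbs, ← Finset.sum_sub_distrib] at hdiff ⊢
  rw [hdiff]

end CoherentGibbs

end StoqPaper

open StoqPaper
theorem statement_2 (n k k' T : ℕ) (S : Fin T → Finset (Fin n))
    (hterm : Fin T → ((Fin n) → Bool) → ℝ)
    (hcard : ∀ b, (S b).card ≤ k)
    (hdep : ∀ b, DependsOnlyOn (S b) (hterm b))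
    (hbit : ∀ i : Fin n, (Finset.univ.filter (fun b => i ∈ S b)).card ≤ k')
    (Hc : ((Fin n) → Bool) → ℝ) (hHc : Hc = fun y => ∑ b, hterm b y)
    (ψ : ((Fin n) → Bool) → ℂ)
    (hψ : ψ = fun x =>
      ((Real.exp (-(Hc x) / 2) / Real.sqrt (∑ y, Real.exp (-(Hc y))) : ℝ) : ℂ))
    (Γ X : Fin n → Matrix ((Fin n) → Bool) ((Fin n) → Bool) ℂ)
    (hΓ : Γ = fun j => Matrix.diagonal (fun x =>
      ((Real.exp ((Hc x - Hc (Function.update x j (!(x j)))) / 2) : ℝ) : ℂ)))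
    (hX : X = fun j => Matrix.of (fun x y =>
      if y = Function.update x j (!(x j)) then (1 : ℂ) else 0)) :
    (∀ j, (Γ j - X j).IsHermitian) ∧
    (∀ j, KLocal (k' * (k - 1) + 1) (Γ j - X j)) ∧
    (∀ j, StoqEntries (Γ j - X j)) ∧
    (∀ j, IsGroundEnergy (Γ j - X j) 0) ∧
    (∀ j, (Γ j - X j).mulVec ψ = 0) ∧
    IsGroundEnergy (∑ j, (Γ j - X j)) 0 ∧
    (∑ j, (Γ j - X j)).mulVec ψ = 0 ∧
    (∀ v, (∑ j, (Γ j - X j)).mulVec v = 0 → ∃ c : ℂ, v = c • ψ) := by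
  subst hHc
  set φ := coherentGibbs fun y => ∑ b, hterm b y
  have hφ : ∀ x, 0 < φ x := coherentGibbs_pos _
  have hterm_eq : ∀ j, Γ j - X j = parentTerm (flipBit j) φ := fun j => by
    simp only [hΓ, hX, parentTerm, φ, coherentGibbs_div_coherentGibbs, flipBit]
    rfl
  have hψφ : ψ = fun x => (φ x : ℂ) := hψ
  have hpsd : ∀ j v, 0 ≤ (qInner v ((parentTerm (flipBit j) φ).mulVec v)).re := fun j =>
    re_qInner_parentTerm_nonneg (flipBit_involutive j) hφ
  have hψ_ne : ψ ≠ 0 := fun h => (hφ fun _ => false).ne' (by simpa [hψφ] using congrFun h _)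
  have hker : ∀ j, (parentTerm (flipBit j) φ).mulVec ψ = 0 := fun j =>
    hψφ ▸ parentTerm_mulVec_self (fun x => (hφ x).ne') _
  have hsum_ker : (∑ j, parentTerm (flipBit j) φ).mulVec ψ = 0 := by
    simp only [Matrix.sum_mulVec, hker, Finset.sum_const_zero]
  simp only [hterm_eq]
  refine ⟨fun j => parentTerm_isHermitian (flipBit_involutive j) φ,
    fun j => ⟨_, card_interactionNbhd_le hcard (hbit j),
      localOn_parentTerm_flipBit (Finset.mem_insert_self j _)
        (dependsOnlyOn_coherentGibbs_flipBit_div hdep j)⟩,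
    fun j => stoqEntries_parentTerm _ φ, fun j => isGroundEnergy_zero (hpsd j) hψ_ne (hker j),
    hker, isGroundEnergy_zero (fun v => ?_) hψ_ne hsum_ker, hsum_ker,
    fun v hv => hψφ ▸ exists_eq_smul_of_sum_parentTerm_flipBit_mulVec_eq_zero hφ hv⟩
  rw [re_qInner_sum_mulVec]
  exact Finset.sum_nonneg fun j _ => hpsd j v
end

section
/- Let H_c be a k-local classical Hamiltonian on n bits with T terms in which each bit is acted on by at most k' terms, and let p be its Gibbs distribution. Then for every ε > 0 there exists a Restricted Boltzmann Machine with n visible nodes, at most 2^k·T hidden nodes, and every node having at most k'·2^k connections, whose distribution is within total variation distance ε of p. -/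
open scoped BigOperators

/-!
Each term `h_b` is reproduced by `2^|S_b|` hidden units, one per assignment `z` of the bits
it acts on. The unit for `z` has weights `±M` to those bits and a bias making its summed-out
factor `1 + exp (log (C e^{-h_b(z)} - 1) - M d(z, x))`, with `d` the Hamming distance on `S_b`.
On the matching pattern this is exactly `C e^{-h_b(x)}`; on every other pattern it lies in
`[1, 1 + δ]` once `M` is large. Hence the RBM output equals `C^T e^{-H_c(x)}` up to a factor in
`[1, (1 + δ)^m] ⊆ [1, 1 + ε]`, and a multiplicative error of `1 + ε` moves the normalized
distribution by at most `ε / 2` in total variation.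
-/

open Finset Real

namespace StoqPaper

theorem tvDist_div_sum_le {α : Type*} [Fintype α] [Nonempty α] {f g : α → ℝ} {ε : ℝ}
    (hε : 0 ≤ ε) (hg : ∀ x, 0 < g x) (hgf : ∀ x, g x ≤ f x)
    (hfg : ∀ x, f x ≤ (1 + ε) * g x) :
    tvDist (fun x => f x / ∑ y, f y) (fun x => g x / ∑ y, g y) ≤ ε / 2 := by
  set A := ∑ y, g y
  set B := ∑ y, f y
  have hA : 0 < A := sum_pos (fun y _ => hg y) univ_nonempty
  have hAB : A ≤ B := sum_le_sum fun y _ => hgf y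
  have hBA : B ≤ (1 + ε) * A := by rw [mul_sum]; exact sum_le_sum fun y _ => hfg y
  have hB : 0 < B := hA.trans_le hAB
  have pointwise : ∀ x, |f x / B - g x / A| ≤ ε * (g x / A) := by
    intro x
    have upper : f x / B ≤ (1 + ε) * (g x / A) :=
      calc f x / B ≤ (1 + ε) * g x / B := by gcongr; exact hfg x
        _ ≤ (1 + ε) * g x / A := by gcongr; nlinarith [hg x]
        _ = (1 + ε) * (g x / A) := mul_div_assoc _ _ _
    have lower : g x / A ≤ (1 + ε) * (f x / B) := by
      rw [← mul_div_assoc, div_le_div_iff₀ hA hB]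
      nlinarith [mul_le_mul_of_nonneg_left hBA (hg x).le,
        mul_le_mul_of_nonneg_right (hgf x) (by positivity : 0 ≤ (1 + ε) * A)]
    rw [abs_sub_le_iff]
    constructor <;> nlinarith
  calc tvDist (fun x => f x / B) (fun x => g x / A)
      ≤ 1 / 2 * ∑ x, ε * (g x / A) := by
        unfold tvDist; gcongr with x; exact pointwise x
    _ = ε / 2 := by rw [← mul_sum, ← sum_div, div_self hA.ne']; ring

theorem gibbs_eq_div_sum {ι : Type*} [Fintype ι] [DecidableEq ι] (Hc : (ι → Bool) → ℝ) {c : ℝ}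
    (hc : c ≠ 0) :
    gibbs Hc = fun x => c * exp (-Hc x) / ∑ y, c * exp (-Hc y) := by
  funext x
  rw [← mul_sum, mul_div_mul_left _ _ hc, gibbs]

theorem sum_exp_sum_mul_bv {σ : Type*} [Fintype σ] [DecidableEq σ] (θ : σ → ℝ) :
    ∑ h : σ → Bool, exp (∑ j, θ j * bv (h j)) = ∏ j, (1 + exp (θ j)) := by
  simp_rw [exp_sum]
  rw [← Fintype.prod_sum fun j b => exp (θ j * bv b)]
  simp [bv, add_comm]

theorem rbm_output_eq_prod {ι σ : Type*} [Fintype ι] [Fintype σ] [DecidableEq σ]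
    (a : ι → ℝ) (c : σ → ℝ) (W : ι → σ → ℝ) (x : ι → Bool) :
    ∑ h : σ → Bool, exp ((∑ i, a i * bv (x i)) + (∑ j, c j * bv (h j)) +
        ∑ i, ∑ j, W i j * bv (x i) * bv (h j)) =
      exp (∑ i, a i * bv (x i)) * ∏ j, (1 + exp (c j + ∑ i, W i j * bv (x i))) := by
  have hexp : ∀ h : σ → Bool, (∑ i, a i * bv (x i)) + (∑ j, c j * bv (h j)) +
      ∑ i, ∑ j, W i j * bv (x i) * bv (h j) =
        (∑ i, a i * bv (x i)) + ∑ j, (c j + ∑ i, W i j * bv (x i)) * bv (h j) := by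
    intro h
    rw [add_assoc, sum_comm (s := univ (α := ι))]
    simp only [add_mul, sum_add_distrib, sum_mul]
  simp_rw [hexp, exp_add (∑ i, a i * bv (x i)), ← mul_sum, sum_exp_sum_mul_bv]

theorem exists_one_lt_mul_exp_neg {α : Type*} [Finite α] (h : α → ℝ) :
    ∃ C > 0, ∀ a, 1 < C * exp (-h a) := by
  obtain ⟨L, hL⟩ := Finite.exists_le fun a => exp (h a)
  refine ⟨max L 0 + 1, by positivity, fun a => ?_⟩
  rw [exp_neg, ← div_eq_mul_inv, one_lt_div (exp_pos _)]
  linarith [hL a, le_max_left L 0]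

theorem exists_pos_one_add_pow_le (N : ℕ) {ε : ℝ} (hε : 0 < ε) :
    ∃ δ > 0, (1 + δ) ^ N ≤ 1 + ε := by
  have hlim : Filter.Tendsto (fun δ : ℝ => (1 + δ) ^ N) (nhdsWithin 0 (Set.Ioi 0)) (nhds 1) := by
    have : Filter.Tendsto (fun δ : ℝ => (1 + δ) ^ N) (nhds 0) (nhds ((1 + 0) ^ N)) :=
      ((continuous_const.add continuous_id).pow N).tendsto 0
    rw [add_zero, one_pow] at this
    exact this.mono_left nhdsWithin_le_nhds
  obtain ⟨δ, hδε, hδ⟩ :=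
    ((hlim.eventually (ge_mem_nhds (by linarith : (1 : ℝ) < 1 + ε))).and self_mem_nhdsWithin).exists
  exact ⟨δ, hδ, hδε⟩

theorem prod_le_pow_mul_prod {σ : Type*} [Fintype σ] {β φ : σ → ℝ} {δ : ℝ}
    (hβ : ∀ u, 0 ≤ β u) (hβφ : ∀ u, β u ≤ φ u) (hφβ : ∀ u, φ u ≤ (1 + δ) * β u) :
    ∏ u, φ u ≤ (1 + δ) ^ Fintype.card σ * ∏ u, β u :=
  calc ∏ u, φ u ≤ ∏ u, (1 + δ) * β u :=
        prod_le_prod (fun u _ => (hβ u).trans (hβφ u)) fun u _ => hφβ u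
    _ = (1 + δ) ^ Fintype.card σ * ∏ u, β u := by rw [prod_mul_distrib, prod_const, card_univ]

theorem one_add_exp_log_sub_le {t δ M d : ℝ} (hδ : 0 < δ) (hM0 : 0 ≤ M)
    (hM : log (t - 1) - log δ ≤ M) (hd : 1 ≤ d) :
    1 + exp (log (t - 1) - M * d) ≤ 1 + δ := by
  have : log (t - 1) - M * d ≤ log δ := by nlinarith
  have := exp_le_exp.2 this
  rw [exp_log hδ] at this
  linarith

theorem two_mul_bv_sub_one_mul_bv (a b : Bool) :
    (2 * bv a - 1) * bv b = bv a - if a ≠ b then 1 else 0 := by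
  cases a <;> cases b <;> norm_num [bv]

section Patterns

variable {ι τ : Type*}

noncomputable def extendFalse {s : Finset ι} (z : s → Bool) : ι → Bool :=
  Function.extend (↑) z fun _ => false

theorem extendFalse_coe {s : Finset ι} (z : s → Bool) (i : s) : extendFalse z i = z i :=
  Subtype.val_injective.extend_apply _ _ _

variable (S : τ → Finset ι)

abbrev Pattern := Σ b : τ, (S b → Bool)

noncomputable def patternWeight [DecidableEq ι] (M : ℝ) (u : Pattern S) (i : ι) : ℝ :=
  if i ∈ S u.1 then M * (2 * bv (extendFalse u.2 i) - 1) else 0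

noncomputable def patternBias (t : Pattern S → ℝ) (M : ℝ) (u : Pattern S) : ℝ :=
  log (t u - 1) - M * ∑ i, bv (u.2 i)

noncomputable def patternFactor (t : Pattern S → ℝ) (M : ℝ) (x : ι → Bool) (u : Pattern S) : ℝ :=
  1 + exp (log (t u - 1) - M * hammingDist u.2 ((S u.1).restrict x))

theorem patternBias_add_sum_patternWeight [Fintype ι] [DecidableEq ι] (t : Pattern S → ℝ)
    (M : ℝ) (u : Pattern S) (x : ι → Bool) :
    patternBias S t M u + ∑ i, patternWeight S M u i * bv (x i) =
      log (t u - 1) - M * hammingDist u.2 ((S u.1).restrict x) := by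
  have hsum : ∑ i, patternWeight S M u i * bv (x i) =
      M * ∑ i : S u.1, (2 * bv (u.2 i) - 1) * bv (x i) := by
    simp only [patternWeight, ite_mul, zero_mul]
    rw [sum_ite_mem, univ_inter, ← sum_coe_sort, mul_sum]
    simp only [extendFalse_coe, mul_assoc]
  rw [hsum, patternBias, hammingDist, natCast_card_filter]
  simp only [two_mul_bv_sub_one_mul_bv, sum_sub_distrib, Finset.restrict]
  ring_nf
  rfl

theorem patternFactor_of_eq (t : Pattern S → ℝ) (ht : ∀ u, 1 < t u) (M : ℝ) (x : ι → Bool)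
    {u : Pattern S} (hu : u.2 = (S u.1).restrict x) :
    patternFactor S t M x u = t u := by
  rw [patternFactor, hu, hammingDist_self, Nat.cast_zero, mul_zero, sub_zero,
    exp_log (by linarith [ht u])]
  ring

theorem prod_patternFactor_bounds [Fintype τ] [DecidableEq ι] (t : Pattern S → ℝ)
    (ht : ∀ u, 1 < t u) {δ M : ℝ} (hδ : 0 < δ) (hM0 : 0 ≤ M)
    (hM : ∀ u, log (t u - 1) - log δ ≤ M) (x : ι → Bool) :
    ∏ b, t ⟨b, (S b).restrict x⟩ ≤ ∏ u, patternFactor S t M x u ∧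
      ∏ u, patternFactor S t M x u ≤
        (1 + δ) ^ Fintype.card (Pattern S) * ∏ b, t ⟨b, (S b).restrict x⟩ := by
  set β : Pattern S → ℝ := fun u => if u.2 = (S u.1).restrict x then t u else 1
  have hβprod : ∏ u, β u = ∏ b, t ⟨b, (S b).restrict x⟩ := by
    rw [Fintype.prod_sigma]
    exact prod_congr rfl fun b _ => Fintype.prod_ite_eq' ((S b).restrict x) fun z => t ⟨b, z⟩
  have hβ : ∀ u, 0 < β u := fun u => by
    by_cases hu : u.2 = (S u.1).restrict x
    · simp only [β, if_pos hu]; linarith [ht u]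
    · simp only [β, if_neg hu]; exact one_pos
  have hbounds : ∀ u, β u ≤ patternFactor S t M x u ∧
      patternFactor S t M x u ≤ (1 + δ) * β u := by
    intro u
    by_cases hu : u.2 = (S u.1).restrict x
    · simp only [β, if_pos hu, patternFactor_of_eq S t ht M x hu]
      constructor <;> nlinarith [ht u]
    · have hd : (1 : ℝ) ≤ hammingDist u.2 ((S u.1).restrict x) := by
        exact_mod_cast hammingDist_pos.2 hu
      simp only [β, if_neg hu, mul_one]
      exact ⟨le_add_of_nonneg_right (exp_pos _).le, one_add_exp_log_sub_le hδ hM0 (hM u) hd⟩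
  rw [← hβprod]
  exact ⟨prod_le_prod (fun u _ => (hβ u).le) fun u _ => (hbounds u).1,
    prod_le_pow_mul_prod (fun u => (hβ u).le) (fun u => (hbounds u).1) fun u => (hbounds u).2⟩

theorem rbm_output_patternWeight_eq_prod [Fintype ι] [DecidableEq ι] [Fintype τ]
    {σ : Type*} [Fintype σ] [DecidableEq σ] (e : σ ≃ Pattern S) (t : Pattern S → ℝ) (M : ℝ)
    (x : ι → Bool) :
    ∑ h : σ → Bool, exp ((∑ i, (0 : ℝ) * bv (x i)) + (∑ j, patternBias S t M (e j) * bv (h j)) +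
        ∑ i, ∑ j, patternWeight S M (e j) i * bv (x i) * bv (h j)) =
      ∏ u, patternFactor S t M x u := by
  rw [rbm_output_eq_prod, e.prod_comp fun u =>
    1 + exp (patternBias S t M u + ∑ i, patternWeight S M u i * bv (x i))]
  simp [patternBias_add_sum_patternWeight, patternFactor]

theorem card_pattern_le [Fintype τ] [DecidableEq ι] {k : ℕ} (hcard : ∀ b, #(S b) ≤ k) :
    Fintype.card (Pattern S) ≤ 2 ^ k * Fintype.card τ :=
  calc Fintype.card (Pattern S) = ∑ b, 2 ^ #(S b) := by simp [Fintype.card_sigma]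
    _ ≤ ∑ _b : τ, 2 ^ k := sum_le_sum fun b _ => Nat.pow_le_pow_right two_pos (hcard b)
    _ = 2 ^ k * Fintype.card τ := by simp [mul_comm]

theorem card_patternWeight_ne_zero_le [Fintype τ] [DecidableEq ι] {k : ℕ}
    (hcard : ∀ b, #(S b) ≤ k) (M : ℝ) (i : ι) :
    #{u : Pattern S | patternWeight S M u i ≠ 0} ≤ #{b | i ∈ S b} * 2 ^ k :=
  calc #{u : Pattern S | patternWeight S M u i ≠ 0}
      ≤ #((univ.filter fun b => i ∈ S b).sigma fun b => (univ : Finset (S b → Bool))) := by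
        refine card_le_card fun u hu => ?_
        simp only [mem_filter, mem_univ, true_and, mem_sigma, and_true] at hu ⊢
        by_contra hi
        exact hu (if_neg hi)
    _ = ∑ b ∈ univ.filter fun b => i ∈ S b, 2 ^ #(S b) := by simp [card_sigma]
    _ ≤ ∑ _b ∈ univ.filter fun b => i ∈ S b, 2 ^ k :=
        sum_le_sum fun b _ => Nat.pow_le_pow_right two_pos (hcard b)
    _ = #{b | i ∈ S b} * 2 ^ k := by rw [sum_const, smul_eq_mul]

theorem card_patternWeight_ne_zero_le_card [Fintype ι] [DecidableEq ι] (M : ℝ)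
    (u : Pattern S) : #{i | patternWeight S M u i ≠ 0} ≤ #(S u.1) := by
  refine card_le_card fun i hi => ?_
  by_contra hiS
  exact (mem_filter.1 hi).2 (if_neg hiS)

theorem card_le_mul_two_pow [Fintype τ] [DecidableEq ι] {k k' : ℕ} (hcard : ∀ b, #(S b) ≤ k)
    (hbit : ∀ i, #{b | i ∈ S b} ≤ k') (b : τ) : #(S b) ≤ k' * 2 ^ k := by
  rcases (S b).eq_empty_or_nonempty with hb | ⟨i, hi⟩
  · simp [hb]
  · have hk' : 0 < k' := (card_pos.2 ⟨b, by simp [hi]⟩).trans_le (hbit i)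
    calc #(S b) ≤ k := hcard b
      _ ≤ 2 ^ k := Nat.lt_two_pow_self.le
      _ ≤ k' * 2 ^ k := Nat.le_mul_of_pos_left _ hk'

noncomputable def termTarget (hterm : τ → (ι → Bool) → ℝ) (C : ℝ) (u : Pattern S) : ℝ :=
  C * exp (-hterm u.1 (extendFalse u.2))

theorem termTarget_restrict {hterm : τ → (ι → Bool) → ℝ}
    (hdep : ∀ b, DependsOnlyOn (S b) (hterm b)) (C : ℝ) (b : τ) (x : ι → Bool) :
    termTarget S hterm C ⟨b, (S b).restrict x⟩ = C * exp (-hterm b x) := by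
  rw [termTarget, hdep b _ x fun i hi => extendFalse_coe _ ⟨i, hi⟩]

theorem prod_termTarget_restrict [Fintype τ] {hterm : τ → (ι → Bool) → ℝ}
    (hdep : ∀ b, DependsOnlyOn (S b) (hterm b)) (C : ℝ) (x : ι → Bool) :
    ∏ b, termTarget S hterm C ⟨b, (S b).restrict x⟩ =
      C ^ Fintype.card τ * exp (-∑ b, hterm b x) := by
  simp only [termTarget_restrict S hdep, prod_mul_distrib, prod_const, card_univ, ← exp_sum,
    sum_neg_distrib]

end Patterns

end StoqPaper

open StoqPaper
open Classical in
theorem statement_7 (n k k' T : ℕ) (S : Fin T → Finset (Fin n))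
    (hterm : Fin T → ((Fin n) → Bool) → ℝ)
    (hcard : ∀ b, (S b).card ≤ k)
    (hdep : ∀ b, DependsOnlyOn (S b) (hterm b))
    (hbit : ∀ i : Fin n, (Finset.univ.filter (fun b => i ∈ S b)).card ≤ k') :
    ∀ ε : ℝ, 0 < ε →
      ∃ (m : ℕ) (a : Fin n → ℝ) (c : Fin m → ℝ) (W : Fin n → Fin m → ℝ),
        m ≤ 2 ^ k * T ∧
        (∀ i : Fin n, (Finset.univ.filter (fun j => W i j ≠ 0)).card ≤ k' * 2 ^ k) ∧
        (∀ j : Fin m, (Finset.univ.filter (fun i => W i j ≠ 0)).card ≤ k' * 2 ^ k) ∧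
        ∀ f : ((Fin n) → Bool) → ℝ,
          f = (fun x => ∑ h : Fin m → Bool, Real.exp ((∑ i, a i * bv (x i)) +
              (∑ j, c j * bv (h j)) + ∑ i, ∑ j, W i j * bv (x i) * bv (h j))) →
          tvDist (fun x => f x / ∑ y, f y) (gibbs (fun y => ∑ b, hterm b y)) ≤ ε := by
  intro ε hε
  obtain ⟨C, hC0, hC⟩ :=
    exists_one_lt_mul_exp_neg fun p : Fin T × (Fin n → Bool) => hterm p.1 p.2
  set t := termTarget S hterm C
  have ht : ∀ u, 1 < t u := fun u => hC (u.1, extendFalse u.2)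
  obtain ⟨δ, hδ, hδε⟩ := exists_pos_one_add_pow_le (Fintype.card (Pattern S)) hε
  obtain ⟨M, hM0, hM⟩ : ∃ M, 0 ≤ M ∧ ∀ u, log (t u - 1) - log δ ≤ M := by
    obtain ⟨L, hL⟩ := Finite.exists_le fun u : Pattern S => log (t u - 1) - log δ
    exact ⟨max L 0, le_max_right L 0, fun u => le_max_of_le_left (hL u)⟩
  let e := (Fintype.equivFin (Pattern S)).symm
  refine ⟨Fintype.card (Pattern S), fun _ => 0, fun j => patternBias S t M (e j),
    fun i j => patternWeight S M (e j) i, by simpa using card_pattern_le S hcard,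
    fun i => ?_, fun j => ?_, ?_⟩
  · rw [card_equiv e (t := {u | patternWeight S M u i ≠ 0}) (by simp)]
    exact (card_patternWeight_ne_zero_le S hcard _ i).trans (Nat.mul_le_mul_right _ (hbit i))
  · exact (card_patternWeight_ne_zero_le_card S _ (e j)).trans
      (card_le_mul_two_pow S hcard hbit _)
  · rintro f rfl
    have hg0 : ∀ x : Fin n → Bool, 0 < ∏ b, t ⟨b, (S b).restrict x⟩ := fun x =>
      prod_pos fun b _ => (ht _).trans' one_pos
    have hbounds := prod_patternFactor_bounds S t ht hδ hM0 hM
    simp only [rbm_output_patternWeight_eq_prod S e]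
    rw [gibbs_eq_div_sum _ (pow_ne_zero (Fintype.card (Fin T)) hC0.ne')]
    simp only [← prod_termTarget_restrict S hdep]
    refine (tvDist_div_sum_le hε.le hg0 (fun x => (hbounds x).1)
      fun x => (hbounds x).2.trans ?_).trans (half_le_self hε.le)
    exact mul_le_mul_of_nonneg_right hδε (hg0 x).le
end

section
/- Let P₁, …, P_T be matrices on n qubits (not necessarily unitary), each P_i being k-local with all entries of its local matrix real and strictly positive. Then P_T⋯P₁|+⟩ ≠ 0, and the state |ψ⟩ = P_T⋯P₁|+⟩ / ‖P_T⋯P₁|+⟩‖₂ is represented exactly in wavefunction by a 2k-local Hyper Boltzmann Machine with n visible nodes, at most kT hidden nodes and T hyperedges in which each node is contained in at most 2 hyperedges; that is, the HBM's output f satisfies f(x)/√(∑_y f(y)²) = ⟨x|ψ⟩ for all x ∈ {0,1}^n. -/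
open scoped BigOperators

/-!
Write `w = P_T ⋯ P₁ |+⟩` as a sum over chains `c₀, c₁, …, c_T = x` of configurations of the
products `∏ₜ P_t(c_{t+1}, c_t)`, times the constant amplitude of `|+⟩`. Since `P_t` is local on
`S_t`, only chains in which `c_{t+1}` agrees with `c_t` outside `S_t` contribute, and such a chain
is determined by the values `c_t(j)` for `j ∈ S_t`. Taking one hidden node per pair `(t, j)` with
`j ∈ S_t`, and the visible nodes for the final configuration, these chains are exactly the
hidden configurations, and the hyperedge of step `t` with energy `-log P_t(c_{t+1}, c_t)` turns the
product into a Boltzmann weight. Every node is read by the step that overwrites it and written by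
the previous step touching its qubit, hence lies in at most two hyperedges.
-/

namespace StoqPaper

open scoped Matrix

section Chain

variable {α : Type*}

/-- The configuration at time `s` of a chain `c₀, …, c_{T-1}` completed by `c_T = x`
(and by `x` at every later time). -/
def chainAt {T : ℕ} (c : Fin T → α) (x : α) (s : ℕ) : α :=
  if h : s < T then c ⟨s, h⟩ else x

@[simp]
lemma chainAt_fin {T : ℕ} (c : Fin T → α) (x : α) (t : Fin T) : chainAt c x t = c t := by
  simp [chainAt]

lemma chainAt_of_le {T : ℕ} (c : Fin T → α) (x : α) {s : ℕ} (hs : T ≤ s) :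
    chainAt c x s = x := by
  simp [chainAt, hs]

@[simp]
lemma chainAt_cons_zero {T : ℕ} (a : α) (c : Fin T → α) (x : α) :
    chainAt (Fin.cons a c : Fin (T + 1) → α) x 0 = a := by
  simp [chainAt]

@[simp]
lemma chainAt_cons_succ {T : ℕ} (a : α) (c : Fin T → α) (x : α) (s : ℕ) :
    chainAt (Fin.cons a c : Fin (T + 1) → α) x (s + 1) = chainAt c x s := by
  by_cases hs : s < T
  · simp [chainAt, hs, ← Fin.succ_mk]
  · simp [chainAt, hs]

variable [Fintype α] [DecidableEq α] {R : Type*} [CommSemiring R]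

theorem mulVec_list_prod_reverse_apply (T : ℕ) (Q : Fin T → Matrix α α R) (v : α → R)
    (x : α) :
    ((List.ofFn Q).reverse.prod *ᵥ v) x
      = ∑ c : Fin T → α, (∏ t : Fin T, Q t (chainAt c x (t + 1)) (chainAt c x t))
          * v (chainAt c x 0) := by
  induction T generalizing v with
  | zero => simp [chainAt]
  | succ T ih =>
    rw [List.ofFn_succ, List.reverse_cons, List.prod_append, List.prod_singleton,
      ← Matrix.mulVec_mulVec, ih, ← (Fin.consEquiv fun _ => α).sum_comp,
      Fintype.sum_prod_type, Finset.sum_comm]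
    refine Finset.sum_congr rfl fun c _ => ?_
    simp only [Matrix.mulVec, dotProduct, Finset.mul_sum]
    refine Finset.sum_congr rfl fun a _ => ?_
    simp only [Fin.consEquiv, Equiv.coe_fn_mk, Fin.prod_univ_succ, Fin.val_succ, Fin.val_zero,
      chainAt_cons_zero, chainAt_cons_succ]
    ring

end Chain

section ChainHBM

variable {n T : ℕ} (S : Fin T → Finset (Fin n))

/-- Hidden nodes: one for each step `t` and each qubit `j ∈ S t`; it carries the value of
qubit `j` just before step `t`. -/
abbrev Slot : Type := Σ t : Fin T, S t

def numHidden : ℕ := Fintype.card (Slot S)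

noncomputable def slotEquiv : Slot S ≃ Fin (numHidden S) := Fintype.equivFin _

/-- The node carrying the value of qubit `j` at time `s`: the hidden node of the first step
`t ≥ s` acting on `j`, or the visible node `j` if there is none. -/
noncomputable def nodeAt (s : ℕ) (j : Fin n) : Fin n ⊕ Fin (numHidden S) :=
  if h : s < T then
    if hj : j ∈ S ⟨s, h⟩ then .inr (slotEquiv S ⟨⟨s, h⟩, j, hj⟩) else nodeAt (s + 1) j
  else .inl j
termination_by T - s

lemma nodeAt_of_mem {t : Fin T} {j : Fin n} (hj : j ∈ S t) :
    nodeAt S t j = .inr (slotEquiv S ⟨t, j, hj⟩) := by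
  rw [nodeAt]
  simp [hj]

lemma nodeAt_succ_of_notMem {t : Fin T} {j : Fin n} (hj : j ∉ S t) :
    nodeAt S (t + 1) j = nodeAt S t j := by
  rw [nodeAt.eq_1 S t j]
  simp [hj]

lemma nodeAt_of_le {s : ℕ} (hs : T ≤ s) (j : Fin n) : nodeAt S s j = .inl j := by
  rw [nodeAt]
  simp [Nat.not_lt.mpr hs]

noncomputable def qubitOf : Fin n ⊕ Fin (numHidden S) → Fin n
  | .inl j => j
  | .inr a => ((slotEquiv S).symm a).2

noncomputable def timeOf : Fin n ⊕ Fin (numHidden S) → ℕ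
  | .inl _ => T
  | .inr a => ((slotEquiv S).symm a).1

lemma qubitOf_inr_slotEquiv (p : Slot S) : qubitOf S (.inr (slotEquiv S p)) = p.2 :=
  congrArg (fun q : Slot S => (q.2 : Fin n)) ((slotEquiv S).symm_apply_apply p)

lemma qubitOf_nodeAt (s : ℕ) (j : Fin n) : qubitOf S (nodeAt S s j) = j := by
  induction s using nodeAt.induct S j with
  | case1 s hs hj => rw [nodeAt_of_mem S (t := ⟨s, hs⟩) hj, qubitOf_inr_slotEquiv]
  | case2 s hs hj ih => rwa [← nodeAt_succ_of_notMem S (t := ⟨s, hs⟩) hj]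
  | case3 s hs => simp [nodeAt_of_le S (Nat.not_lt.mp hs), qubitOf]

lemma timeOf_nodeAt_of_mem {t : Fin T} {j : Fin n} (hj : j ∈ S t) :
    timeOf S (nodeAt S t j) = t := by
  simp [nodeAt_of_mem S hj, timeOf]

lemma le_timeOf_nodeAt {s : ℕ} (hs : s ≤ T) (j : Fin n) : s ≤ timeOf S (nodeAt S s j) := by
  induction s using nodeAt.induct S j with
  | case1 s hs' hj => rw [timeOf_nodeAt_of_mem S (t := ⟨s, hs'⟩) hj]
  | case2 s hs' hj ih =>
    rw [← nodeAt_succ_of_notMem S (t := ⟨s, hs'⟩) hj]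
    exact Nat.le_of_succ_le (ih hs')
  | case3 s hs' => simp [nodeAt_of_le S (Nat.not_lt.mp hs'), timeOf, hs]

lemma timeOf_nodeAt_le {t : Fin T} {j : Fin n} (hj : j ∈ S t) {s : ℕ} (hs : s ≤ t) :
    timeOf S (nodeAt S s j) ≤ t := by
  induction s using nodeAt.induct S j with
  | case1 s hs' hj' => rw [timeOf_nodeAt_of_mem S (t := ⟨s, hs'⟩) hj']; exact hs
  | case2 s hs' hj' ih =>
    have hst : s ≠ t := fun h => hj' (by rwa [show (⟨s, hs'⟩ : Fin T) = t from Fin.ext h])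
    rw [← nodeAt_succ_of_notMem S (t := ⟨s, hs'⟩) hj']
    exact ih (Nat.lt_of_le_of_ne hs hst)
  | case3 s hs' => exact absurd (hs.trans_lt t.isLt) hs'

lemma nodeAt_succ_ne {t t' : Fin T} (hlt : t < t') {j : Fin n} (hj : j ∈ S t') :
    nodeAt S (t + 1) j ≠ nodeAt S (t' + 1) j := fun h =>
  absurd ((le_timeOf_nodeAt S (s := t' + 1) t'.isLt j).trans_eq (congrArg (timeOf S) h.symm))
    (Nat.not_le.mpr (Nat.lt_succ_of_le (timeOf_nodeAt_le S hj hlt)))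

lemma eq_of_nodeAt_succ_eq {t t' : Fin T} {j j' : Fin n} (hj : j ∈ S t) (hj' : j' ∈ S t')
    (h : nodeAt S (t + 1) j = nodeAt S (t' + 1) j') : t = t' := by
  obtain rfl : j = j' := by simpa only [qubitOf_nodeAt] using congrArg (qubitOf S) h
  rcases lt_trichotomy t t' with hlt | heq | hgt
  · exact absurd h (nodeAt_succ_ne S hlt hj')
  · exact heq
  · exact absurd h.symm (nodeAt_succ_ne S hgt hj)

noncomputable def stepEdge (t : Fin T) : Finset (Fin n ⊕ Fin (numHidden S)) :=
  (S t).image (nodeAt S t) ∪ (S t).image (nodeAt S (t + 1))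

lemma card_stepEdge_le (t : Fin T) : (stepEdge S t).card ≤ 2 * (S t).card :=
  calc (stepEdge S t).card
      ≤ ((S t).image (nodeAt S t)).card + ((S t).image (nodeAt S (t + 1))).card :=
        Finset.card_union_le _ _
    _ ≤ 2 * (S t).card := by
        rw [two_mul]; exact add_le_add Finset.card_image_le Finset.card_image_le

lemma card_filter_mem_stepEdge_le_two (v : Fin n ⊕ Fin (numHidden S)) :
    (Finset.univ.filter fun t => v ∈ stepEdge S t).card ≤ 2 := by
  have hread : (Finset.univ.filter fun t => v ∈ (S t).image (nodeAt S t)).card ≤ 1 := by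
    refine Finset.card_le_one.mpr fun t ht t' ht' => ?_
    simp only [Finset.mem_filter, Finset.mem_univ, true_and, Finset.mem_image] at ht ht'
    obtain ⟨j, hj, rfl⟩ := ht
    obtain ⟨j', hj', h⟩ := ht'
    exact Fin.ext (by rw [← timeOf_nodeAt_of_mem S hj, ← h, timeOf_nodeAt_of_mem S hj'])
  have hwrite : (Finset.univ.filter fun t => v ∈ (S t).image (nodeAt S (t + 1))).card ≤ 1 := by
    refine Finset.card_le_one.mpr fun t ht t' ht' => ?_
    simp only [Finset.mem_filter, Finset.mem_univ, true_and, Finset.mem_image] at ht ht'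
    obtain ⟨j, hj, rfl⟩ := ht
    obtain ⟨j', hj', h⟩ := ht'
    exact eq_of_nodeAt_succ_eq S hj hj' h.symm
  simp only [stepEdge, Finset.mem_union, Finset.filter_or]
  exact (Finset.card_union_le _ _).trans (add_le_add hread hwrite)

lemma numHidden_eq_sum_card : numHidden S = ∑ t, (S t).card := by
  simp [numHidden, Fintype.card_sigma]

lemma numHidden_le {k : ℕ} (hcard : ∀ t, (S t).card ≤ k) : numHidden S ≤ k * T := by
  rw [numHidden_eq_sum_card]
  simpa [mul_comm] using Finset.sum_le_sum fun t (_ : t ∈ Finset.univ) => hcard t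

noncomputable def configAt (y : Fin n ⊕ Fin (numHidden S) → Bool) (s : ℕ) : Fin n → Bool :=
  fun j => y (nodeAt S s j)

lemma configAt_succ_of_notMem (y : Fin n ⊕ Fin (numHidden S) → Bool) {t : Fin T} {j : Fin n}
    (hj : j ∉ S t) : configAt S y (t + 1) j = configAt S y t j := by
  simp only [configAt, nodeAt_succ_of_notMem S hj]

noncomputable def chainOfHidden (x : Fin n → Bool) (h : Fin (numHidden S) → Bool) :
    Fin T → Fin n → Bool :=
  fun t => configAt S (Sum.elim x h) t

lemma chainAt_chainOfHidden (x : Fin n → Bool) (h : Fin (numHidden S) → Bool) (s : ℕ) :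
    chainAt (chainOfHidden S x h) x s = configAt S (Sum.elim x h) s := by
  by_cases hs : s < T
  · simp [chainAt, hs, chainOfHidden]
  · funext j
    simp [chainAt_of_le _ _ (Nat.not_lt.mp hs), configAt, nodeAt_of_le S (Nat.not_lt.mp hs)]

lemma chainOfHidden_injective (x : Fin n → Bool) : Function.Injective (chainOfHidden S x) := by
  intro h h' hh
  funext a
  obtain ⟨⟨t, j, hj⟩, rfl⟩ := (slotEquiv S).surjective a
  have hval : ∀ h, h (slotEquiv S ⟨t, j, hj⟩) = chainOfHidden S x h t j := fun h => by
    simp [chainOfHidden, configAt, nodeAt_of_mem S hj]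
  rw [hval h, hval h', hh]

noncomputable def hiddenOfChain (c : Fin T → Fin n → Bool) : Fin (numHidden S) → Bool :=
  fun a => c ((slotEquiv S).symm a).1 ((slotEquiv S).symm a).2

lemma hiddenOfChain_slotEquiv (c : Fin T → Fin n → Bool) (p : Slot S) :
    hiddenOfChain S c (slotEquiv S p) = c p.1 p.2 :=
  congrArg (fun q : Slot S => c q.1 q.2) ((slotEquiv S).symm_apply_apply p)

lemma configAt_hiddenOfChain (c : Fin T → Fin n → Bool) (x : Fin n → Bool)
    (hc : ∀ t : Fin T, ∀ j ∉ S t, chainAt c x (t + 1) j = chainAt c x t j) (s : ℕ) :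
    configAt S (Sum.elim x (hiddenOfChain S c)) s = chainAt c x s := by
  funext j
  induction s using nodeAt.induct S j with
  | case1 s hs hj =>
    simp [configAt, nodeAt_of_mem S (t := ⟨s, hs⟩) hj, hiddenOfChain_slotEquiv, chainAt, hs]
  | case2 s hs hj ih =>
    rw [← configAt_succ_of_notMem S _ (t := ⟨s, hs⟩) hj, ih, hc ⟨s, hs⟩ j hj]
  | case3 s hs =>
    simp [configAt, nodeAt_of_le S (Nat.not_lt.mp hs), chainAt_of_le _ _ (Nat.not_lt.mp hs)]

variable {S} {Pm : Fin T → Matrix (Fin n → Bool) (Fin n → Bool) ℂ}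

theorem sum_hidden_eq_sum_chain (hloc : ∀ t, LocalOn (S t) (Pm t)) (x : Fin n → Bool) :
    ∑ h : Fin (numHidden S) → Bool,
        ∏ t : Fin T, Pm t (configAt S (Sum.elim x h) (t + 1)) (configAt S (Sum.elim x h) t)
      = ∑ c : Fin T → Fin n → Bool, ∏ t : Fin T, Pm t (chainAt c x (t + 1)) (chainAt c x t) := by
  refine Fintype.sum_of_injective (chainOfHidden S x) (chainOfHidden_injective S x) _ _
    (fun c hc => ?_) (fun h => by simp only [chainAt_chainOfHidden])
  by_contra hne
  refine hc ⟨hiddenOfChain S c, funext fun t => ?_⟩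
  have hagree : ∀ t : Fin T, ∀ j ∉ S t, chainAt c x (t + 1) j = chainAt c x t j :=
    fun t j hj => by_contra fun h => Finset.prod_ne_zero_iff.mp hne t (Finset.mem_univ t)
      ((hloc t).1 _ _ ⟨j, hj, h⟩)
  simp [chainOfHidden, configAt_hiddenOfChain S c x hagree]

/-- The entries read here are positive (see `chainHBM_output`), so `Real.log` is not at its
junk values. -/
noncomputable def stepEnergy (P : Matrix (Fin n → Bool) (Fin n → Bool) ℂ) (t : ℕ)
    (y : Fin n ⊕ Fin (numHidden S) → Bool) : ℝ :=
  -Real.log (P (configAt S y (t + 1)) (configAt S y t)).re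

lemma stepEnergy_dependsOnlyOn {t : Fin T} (hloc : LocalOn (S t) (Pm t)) :
    DependsOnlyOn (stepEdge S t) (stepEnergy (S := S) (Pm t) t) := by
  intro y y' hy
  have hread : ∀ i ∈ S t, configAt S y t i = configAt S y' t i := fun i hi =>
    hy _ (Finset.mem_union_left _ (Finset.mem_image_of_mem _ hi))
  have hwrite : ∀ i ∈ S t, configAt S y (t + 1) i = configAt S y' (t + 1) i := fun i hi =>
    hy _ (Finset.mem_union_right _ (Finset.mem_image_of_mem _ hi))
  simp only [stepEnergy, hloc.2 _ _ _ _ hwrite hread (fun i hi => configAt_succ_of_notMem S y hi)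
    (fun i hi => configAt_succ_of_notMem S y' hi)]

variable (S Pm) in
noncomputable def chainHBM (hloc : ∀ t, LocalOn (S t) (Pm t)) : HBM n (numHidden S) T where
  edge := stepEdge S
  F t := stepEnergy (Pm t) t
  F_local _ := stepEnergy_dependsOnlyOn (hloc _)

lemma chainHBM_isKLocal {k : ℕ} (hloc : ∀ t, LocalOn (S t) (Pm t))
    (hcard : ∀ t, (S t).card ≤ k) : (chainHBM S Pm hloc).IsKLocal (2 * k) := fun t =>
  (card_stepEdge_le S t).trans (Nat.mul_le_mul_left 2 (hcard t))

lemma chainHBM_deg_le_two (hloc : ∀ t, LocalOn (S t) (Pm t))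
    (v : Fin n ⊕ Fin (numHidden S)) : (chainHBM S Pm hloc).deg v ≤ 2 :=
  card_filter_mem_stepEdge_le_two S v

theorem chainHBM_output (hloc : ∀ t, LocalOn (S t) (Pm t))
    (hpos : ∀ t, ∀ x y : Fin n → Bool, (∀ i, i ∉ S t → x i = y i) →
      (Pm t x y).im = 0 ∧ 0 < (Pm t x y).re)
    (x : Fin n → Bool) :
    ((chainHBM S Pm hloc).output x : ℂ) = ∑ h : Fin (numHidden S) → Bool,
      ∏ t : Fin T, Pm t (configAt S (Sum.elim x h) (t + 1)) (configAt S (Sum.elim x h) t) := by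
  simp only [HBM.output, chainHBM, stepEnergy, Finset.sum_neg_distrib, neg_neg, Real.exp_sum,
    Complex.ofReal_sum, Complex.ofReal_prod]
  refine Finset.sum_congr rfl fun h _ => Finset.prod_congr rfl fun t _ => ?_
  obtain ⟨him, hre⟩ := hpos t _ _ fun i hi => configAt_succ_of_notMem S _ hi
  rw [Real.exp_log hre]
  exact Complex.ext (by simp) (by simp [him])

end ChainHBM

lemma HBM.output_pos {n m T : ℕ} (M : HBM n m T) (x : Fin n → Bool) : 0 < M.output x :=
  Finset.sum_pos (fun _ _ => Real.exp_pos _) Finset.univ_nonempty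

lemma l2norm_ofReal_mul {α : Type*} [Fintype α] (f : α → ℝ) {c : ℝ} (hc : 0 ≤ c) :
    l2norm (fun y => ((c * f y : ℝ) : ℂ)) = c * √(∑ y, f y ^ 2) := by
  simp only [l2norm, Complex.normSq_ofReal, ← sq, mul_pow, ← Finset.mul_sum]
  rw [Real.sqrt_mul (sq_nonneg c), Real.sqrt_sq hc]

lemma ofReal_div_sqrt_sum_sq {α : Type*} [Fintype α] (f : α → ℝ) {c : ℝ} (hc : 0 < c)
    (x : α) :
    ((f x / √(∑ y, f y ^ 2) : ℝ) : ℂ)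
      = ((l2norm (fun y => ((c * f y : ℝ) : ℂ)) : ℝ) : ℂ)⁻¹ * ((c * f x : ℝ) : ℂ) := by
  rw [l2norm_ofReal_mul f hc.le, ← Complex.ofReal_inv, ← Complex.ofReal_mul, mul_inv,
    mul_comm c⁻¹, mul_assoc, inv_mul_cancel_left₀ hc.ne', div_eq_inv_mul]

end StoqPaper

open StoqPaper
theorem statement_12 (n k T : ℕ)
    (Pm : Fin T → Matrix ((Fin n) → Bool) ((Fin n) → Bool) ℂ)
    (hP : ∀ i, KLocalPositive k (Pm i)) :
    ∀ w : ((Fin n) → Bool) → ℂ,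
      w = ((List.ofFn Pm).reverse.prod).mulVec (plusState (Fin n)) →
      w ≠ 0 ∧
      ∃ (m : ℕ) (M : HBM n m T), m ≤ k * T ∧ M.IsKLocal (2 * k) ∧
        (∀ v, M.deg v ≤ 2) ∧
        ∀ x, ((M.output x / Real.sqrt (∑ y, (M.output y) ^ 2) : ℝ) : ℂ) =
          ((l2norm w : ℝ) : ℂ)⁻¹ * w x := by
  intro w hw
  choose S hcard hloc hpos using hP
  set M := chainHBM S Pm hloc
  have hc : 0 < (√(2 ^ n))⁻¹ := by positivity
  obtain rfl : w = fun x => (((√(2 ^ n))⁻¹ * M.output x : ℝ) : ℂ) := by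
    funext x
    rw [hw, mulVec_list_prod_reverse_apply]
    simp only [plusState, Fintype.card_fin, ← Finset.sum_mul, ← sum_hidden_eq_sum_chain hloc,
      M, ← chainHBM_output hloc hpos]
    push_cast
    ring
  refine ⟨fun h0 => ?_, numHidden S, M, numHidden_le S hcard, chainHBM_isKLocal hloc hcard,
    chainHBM_deg_le_two hloc, ofReal_div_sqrt_sum_sq M.output hc⟩
  have := congrFun h0 fun _ => false
  simp only [Pi.zero_apply, Complex.ofReal_eq_zero, mul_eq_zero, inv_eq_zero] at this
  exact this.elim (by positivity) (M.output_pos _).ne'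
end

section
/- Let M be a k-local Hyper Boltzmann Machine with n visible nodes, m hidden nodes and T hyperedges, each node contained in at most k' hyperedges, with all local energies F_e real-valued (hence finite). Then for every ε > 0 there exists a Deep Boltzmann Machine with n visible nodes, at most 2^k·T hidden nodes in the middle layer, m hidden nodes in the deep layer, and every node having at most k'·2^k connections, whose distribution is within total variation distance ε of the distribution of M. -/
open scoped BigOperators

/-! Give each hyperedge `t` and each bit pattern `s` on its nodes a middle-layer unit, coupled with
weight `±β` to the nodes of `t` and biased so that, given a configuration `y` of the other layers,
its input field is `c(t,s) - β · d(s, y|t)` with `d` the Hamming distance. Summing out the middle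
layer turns the DBM weight of `y` into `∏ (1 + exp field)`. As `β → ∞` the factor of every unit
with `s ≠ y|t` tends to `1`, while the unit with `s = y|t` contributes `1 + exp c(t,s)`, which is
`exp (K_t - F_t y)` for a constant `K_t` bounding `F_t`. Hence the DBM output tends to
`exp (∑ K_t)` times the HBM output, and the normalized distributions converge. -/

open Finset Filter Topology

lemma Finset.sum_univ_dite_mem {α M : Type*} [Fintype α] [AddCommMonoid M] (s : Finset α)
    [DecidablePred (· ∈ s)] (f : s → M) :
    ∑ x, (if h : x ∈ s then f ⟨x, h⟩ else 0) = ∑ x : s, f x := by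
  rw [← Finset.sum_subset (subset_univ s) fun x _ hx => dif_neg hx, ← Finset.sum_coe_sort s]
  exact sum_congr rfl fun x _ => dif_pos x.2

lemma Real.tendsto_one_add_exp_sub_mul_atTop (c : ℝ) {d : ℝ} (hd : 0 < d) :
    Tendsto (fun β => 1 + Real.exp (c - β * d)) atTop (𝓝 1) := by
  have h : Tendsto (fun β => c - β * d) atTop atBot :=
    tendsto_atBot_add_const_left _ c (tendsto_neg_atTop_atBot.comp (tendsto_id.atTop_mul_const hd))
  simpa using (Real.tendsto_exp_atBot.comp h).const_add 1

lemma Real.one_add_exp_log_exp_sub_one {a : ℝ} (ha : 0 < a) :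
    1 + Real.exp (Real.log (Real.exp a - 1)) = Real.exp a := by
  rw [Real.exp_log (by linarith [Real.add_one_lt_exp ha.ne'])]
  ring

namespace StoqPaper

lemma tendsto_div_sum_of_tendsto_const_mul {α ι : Type*} [Fintype ι] {l : Filter α}
    {f : α → ι → ℝ} {g : ι → ℝ} {c : ℝ} (hc : c ≠ 0) (hg : ∑ j, g j ≠ 0)
    (hf : ∀ i, Tendsto (f · i) l (𝓝 (c * g i))) (i : ι) :
    Tendsto (fun a => f a i / ∑ j, f a j) l (𝓝 (g i / ∑ j, g j)) := by
  have hsum : Tendsto (fun a => ∑ j, f a j) l (𝓝 (c * ∑ j, g j)) := by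
    rw [mul_sum]; exact tendsto_finsetSum _ fun j _ => hf j
  have h := (hf i).div hsum (mul_ne_zero hc hg)
  rwa [mul_div_mul_left _ _ hc] at h

lemma tendsto_tvDist_zero {α ι : Type*} [Fintype ι] {l : Filter α} {p : α → ι → ℝ} {q : ι → ℝ}
    (hp : ∀ i, Tendsto (p · i) l (𝓝 (q i))) : Tendsto (fun a => tvDist (p a) q) l (𝓝 0) := by
  have h := (tendsto_finsetSum univ fun i _ => ((hp i).sub_const (q i)).abs).const_mul (1 / 2 : ℝ)
  simpa [tvDist] using h

namespace DBM

variable {n m₁ m₂ : ℕ}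

lemma output_eq_sum_prod (D : DBM n m₁ m₂) (x : Fin n → Bool) :
    D.output x = ∑ g : Fin m₂ → Bool,
      Real.exp (∑ i, D.a i * bv (x i) + ∑ l, D.c l * bv (g l)) *
        ∏ j, (1 + Real.exp (D.b j + ∑ i, D.W i j * bv (x i) + ∑ l, D.U j l * bv (g l))) := by
  rw [output, sum_comm]
  refine sum_congr rfl fun g _ => ?_
  set θ : Fin m₁ → ℝ := fun j => D.b j + ∑ i, D.W i j * bv (x i) + ∑ l, D.U j l * bv (g l)
  have henergy : ∀ h, -D.energy x h g
      = ∑ i, D.a i * bv (x i) + ∑ l, D.c l * bv (g l) + ∑ j, θ j * bv (h j) := by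
    intro h
    simp only [energy, θ, add_mul, sum_add_distrib, sum_mul]
    rw [sum_comm (f := fun j i => D.W i j * bv (x i) * bv (h j))]
    simp only [mul_right_comm (D.U _ _) (bv (g _)) (bv (h _))]
    ring
  change _ = _ * ∏ j, (1 + Real.exp (θ j))
  simp only [henergy, Real.exp_add, ← mul_sum, Real.exp_sum]
  rw [← Fintype.prod_sum (fun j b => Real.exp (θ j * bv b))]
  congr 1
  exact prod_congr rfl fun j _ => by simp [bv, add_comm]

variable {n m : ℕ} {P : Type*} [Fintype P]

/-- Middle-layer units indexed by an arbitrary finite type `P`, transported to `Fin (card P)`. -/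
noncomputable def ofUnits (b : P → ℝ) (w : P → Fin n ⊕ Fin m → ℝ) : DBM n (Fintype.card P) m where
  a := 0
  b := b ∘ (Fintype.equivFin P).symm
  c := 0
  W i j := w ((Fintype.equivFin P).symm j) (.inl i)
  U j l := w ((Fintype.equivFin P).symm j) (.inr l)

variable (b : P → ℝ) (w : P → Fin n ⊕ Fin m → ℝ)

lemma output_ofUnits (x : Fin n → Bool) :
    (ofUnits b w).output x = ∑ g : Fin m → Bool,
      ∏ p, (1 + Real.exp (b p + ∑ v, w p v * bv (Sum.elim x g v))) := by
  rw [output_eq_sum_prod]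
  refine sum_congr rfl fun g _ => ?_
  simp only [ofUnits, Pi.zero_apply, zero_mul, sum_const_zero, add_zero, Real.exp_zero, one_mul,
    Function.comp_apply, Fintype.sum_sum_type, Sum.elim_inl, Sum.elim_inr, add_assoc]
  exact Fintype.prod_equiv (Fintype.equivFin P).symm _ _ fun _ => rfl

lemma degVis_ofUnits (i : Fin n) : (ofUnits b w).degVis i = #{p | w p (.inl i) ≠ 0} := by
  classical
  rw [degVis, ← Fintype.card_subtype, ← Fintype.card_subtype]
  exact Fintype.card_congr ((Fintype.equivFin P).symm.subtypeEquiv fun _ => Iff.rfl)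

lemma degDeep_ofUnits (l : Fin m) : (ofUnits b w).degDeep l = #{p | w p (.inr l) ≠ 0} := by
  classical
  rw [degDeep, ← Fintype.card_subtype, ← Fintype.card_subtype]
  exact Fintype.card_congr ((Fintype.equivFin P).symm.subtypeEquiv fun _ => Iff.rfl)

lemma degMid_ofUnits (j : Fin (Fintype.card P)) :
    (ofUnits b w).degMid j = #{v | w ((Fintype.equivFin P).symm j) v ≠ 0} := by
  classical
  simp only [degMid, card_filter, Fintype.sum_sum_type]
  rfl

end DBM

namespace HBM

variable {n m T : ℕ} (M : HBM n m T)

abbrev Pattern : Type := Σ t : Fin T, (M.edge t → Bool)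

def extend {t : Fin T} (s : M.edge t → Bool) (v : Fin n ⊕ Fin m) : Bool :=
  if h : v ∈ M.edge t then s ⟨v, h⟩ else false

lemma F_extend_restrict (t : Fin T) (y : Fin n ⊕ Fin m → Bool) :
    M.F t (M.extend fun v : M.edge t => y v) = M.F t y :=
  M.F_local t _ _ fun v hv => by simp [extend, hv]

noncomputable def energyBound (t : Fin T) : ℝ := univ.sup' univ_nonempty (M.F t) + 1

lemma F_lt_energyBound (t : Fin T) (y : Fin n ⊕ Fin m → Bool) : M.F t y < M.energyBound t :=
  (le_sup' (M.F t) (mem_univ y)).trans_lt (lt_add_one _)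

/-- Chosen so that `1 + exp (patternConst p) = exp (energyBound t - F t (extend s))`. -/
noncomputable def patternConst (p : M.Pattern) : ℝ :=
  Real.log (Real.exp (M.energyBound p.1 - M.F p.1 (M.extend p.2)) - 1)

noncomputable def patternWeight (β : ℝ) (p : M.Pattern) (v : Fin n ⊕ Fin m) : ℝ :=
  if h : v ∈ M.edge p.1 then β * (2 * bv (p.2 ⟨v, h⟩) - 1) else 0

noncomputable def patternBias (β : ℝ) (p : M.Pattern) : ℝ :=
  M.patternConst p - β * ∑ v, bv (p.2 v)

lemma patternBias_add_sum_patternWeight (β : ℝ) (p : M.Pattern) (y : Fin n ⊕ Fin m → Bool) :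
    M.patternBias β p + ∑ v, M.patternWeight β p v * bv (y v)
      = M.patternConst p - β * ∑ v : M.edge p.1, if p.2 v = y v then 0 else 1 := by
  have hmismatch : ∀ a b : Bool, (if a = b then 0 else 1 : ℝ) = bv a + (1 - 2 * bv a) * bv b := by
    intro a b; cases a <;> cases b <;> norm_num [bv]
  have hweight : ∑ v, M.patternWeight β p v * bv (y v)
      = ∑ v : M.edge p.1, β * (2 * bv (p.2 v) - 1) * bv (y v) := by
    rw [← Finset.sum_univ_dite_mem]
    exact sum_congr rfl fun v _ => by unfold patternWeight; split_ifs <;> simp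
  have hsign : ∑ v : M.edge p.1, β * (2 * bv (p.2 v) - 1) * bv (y v)
      = -∑ v : M.edge p.1, β * ((1 - 2 * bv (p.2 v)) * bv (y v)) := by
    rw [← sum_neg_distrib]; exact sum_congr rfl fun _ _ => by ring
  simp only [patternBias, hweight, hsign, hmismatch, mul_add, sum_add_distrib, mul_sum]
  ring

lemma tendsto_one_add_exp_patternBias_add_sum_patternWeight (t : Fin T) (s : M.edge t → Bool)
    (y : Fin n ⊕ Fin m → Bool) :
    Tendsto (fun β => 1 + Real.exp (M.patternBias β ⟨t, s⟩
        + ∑ v, M.patternWeight β ⟨t, s⟩ v * bv (y v))) atTop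
      (𝓝 (if s = (fun v : M.edge t => y v) then Real.exp (M.energyBound t - M.F t y) else 1)) := by
  simp only [patternBias_add_sum_patternWeight]
  split_ifs with hs
  · subst hs
    simp only [if_true, sum_const_zero, mul_zero, sub_zero, patternConst]
    rw [Real.one_add_exp_log_exp_sub_one (sub_pos.2 (M.F_lt_energyBound t _)), F_extend_restrict]
    exact tendsto_const_nhds
  · obtain ⟨v, hv⟩ : ∃ v, s v ≠ y v := by
      by_contra! h
      exact hs (funext h)
    refine Real.tendsto_one_add_exp_sub_mul_atTop _ (lt_of_lt_of_le one_pos ?_)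
    calc (1 : ℝ) = if s v = y v then 0 else 1 := (if_neg hv).symm
      _ ≤ ∑ v : M.edge t, if s v = y v then 0 else 1 :=
        single_le_sum (f := fun v => if s v = y v then (0 : ℝ) else 1)
          (fun _ _ => by split_ifs <;> norm_num) (mem_univ v)

lemma prod_pattern_ite_eq_restrict (y : Fin n ⊕ Fin m → Bool) :
    ∏ p : M.Pattern,
        (if p.2 = (fun v : M.edge p.1 => y v) then Real.exp (M.energyBound p.1 - M.F p.1 y) else 1)
      = Real.exp (∑ t, M.energyBound t) * Real.exp (-∑ t, M.F t y) := by
  rw [Fintype.prod_sigma, ← Real.exp_add, ← sum_neg_distrib, ← sum_add_distrib, Real.exp_sum]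
  exact prod_congr rfl fun t _ => by simp [sub_eq_add_neg]

noncomputable def approxDBM (β : ℝ) : DBM n (Fintype.card M.Pattern) m :=
  DBM.ofUnits (M.patternBias β) (M.patternWeight β)

lemma tendsto_output_approxDBM (x : Fin n → Bool) :
    Tendsto (fun β => (M.approxDBM β).output x) atTop
      (𝓝 (Real.exp (∑ t, M.energyBound t) * M.output x)) := by
  simp only [approxDBM, DBM.output_ofUnits, output, mul_sum, ← prod_pattern_ite_eq_restrict]
  exact tendsto_finsetSum _ fun _ _ => tendsto_finsetProd _ fun p _ =>
    M.tendsto_one_add_exp_patternBias_add_sum_patternWeight p.1 p.2 _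

lemma tendsto_dist_approxDBM (x : Fin n → Bool) :
    Tendsto (fun β => (M.approxDBM β).dist x) atTop (𝓝 (M.dist x)) :=
  tendsto_div_sum_of_tendsto_const_mul (Real.exp_ne_zero _)
    (sum_pos (fun _ _ => sum_pos (fun _ _ => Real.exp_pos _) univ_nonempty) univ_nonempty).ne'
    M.tendsto_output_approxDBM x

variable {M} {k k' : ℕ}

lemma card_pattern_le (hk : M.IsKLocal k) : Fintype.card M.Pattern ≤ 2 ^ k * T := by
  simp only [Fintype.card_sigma, Fintype.card_fun, Fintype.card_coe, Fintype.card_bool]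
  calc ∑ t, 2 ^ #(M.edge t) ≤ ∑ _t : Fin T, 2 ^ k :=
        sum_le_sum fun t _ => Nat.pow_le_pow_right two_pos (hk t)
    _ = 2 ^ k * T := by simp [mul_comm]

lemma card_edge_le (hk : M.IsKLocal k) (hdeg : ∀ v, M.deg v ≤ k') (t : Fin T) :
    #(M.edge t) ≤ k' * 2 ^ k := by
  obtain he | ⟨v, hv⟩ := (M.edge t).eq_empty_or_nonempty
  · simp [he]
  have hk' : 0 < k' := (card_pos.2 ⟨t, by simp [hv]⟩).trans_le (hdeg v)
  calc #(M.edge t) ≤ k := hk t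
    _ ≤ 2 ^ k := Nat.lt_two_pow_self.le
    _ ≤ k' * 2 ^ k := Nat.le_mul_of_pos_left _ hk'

lemma card_pattern_mem_le (hk : M.IsKLocal k) (hdeg : ∀ v, M.deg v ≤ k')
    (v : Fin n ⊕ Fin m) : #{p : M.Pattern | v ∈ M.edge p.1} ≤ k' * 2 ^ k := by
  have hsigma : ({p : M.Pattern | v ∈ M.edge p.1} : Finset M.Pattern)
      = ({t | v ∈ M.edge t} : Finset (Fin T)).sigma fun _ => univ := by
    ext; simp
  rw [hsigma, card_sigma]
  calc ∑ t ∈ {t | v ∈ M.edge t}, #(univ : Finset (M.edge t → Bool))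
        ≤ ∑ t ∈ {t | v ∈ M.edge t}, 2 ^ k :=
        sum_le_sum fun t _ => by simpa using Nat.pow_le_pow_right two_pos (hk t)
    _ = M.deg v * 2 ^ k := by simp [deg]
    _ ≤ k' * 2 ^ k := Nat.mul_le_mul_right _ (hdeg v)

lemma mem_edge_of_patternWeight_ne_zero {β : ℝ} {p : M.Pattern} {v : Fin n ⊕ Fin m}
    (h : M.patternWeight β p v ≠ 0) : v ∈ M.edge p.1 := by
  by_contra hv
  exact h (dif_neg hv)

lemma card_patterns_adj_le (hk : M.IsKLocal k) (hdeg : ∀ v, M.deg v ≤ k') (β : ℝ)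
    (v : Fin n ⊕ Fin m) : #{p | M.patternWeight β p v ≠ 0} ≤ k' * 2 ^ k :=
  (card_le_card fun p hp => by
    simpa using mem_edge_of_patternWeight_ne_zero (mem_filter.1 hp).2).trans
    (card_pattern_mem_le hk hdeg v)

lemma card_nodes_adj_le (hk : M.IsKLocal k) (hdeg : ∀ v, M.deg v ≤ k') (β : ℝ)
    (p : M.Pattern) : #{v | M.patternWeight β p v ≠ 0} ≤ k' * 2 ^ k :=
  (card_le_card fun _ hv => mem_edge_of_patternWeight_ne_zero (mem_filter.1 hv).2).trans
    (card_edge_le hk hdeg p.1)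

end HBM

end StoqPaper

open StoqPaper
theorem statement_14 (n m T k k' : ℕ) (M : HBM n m T)
    (hk : M.IsKLocal k) (hdeg : ∀ v, M.deg v ≤ k') :
    ∀ ε : ℝ, 0 < ε →
      ∃ (m₁ : ℕ) (D : DBM n m₁ m),
        m₁ ≤ 2 ^ k * T ∧
        (∀ i, D.degVis i ≤ k' * 2 ^ k) ∧
        (∀ j, D.degMid j ≤ k' * 2 ^ k) ∧
        (∀ l, D.degDeep l ≤ k' * 2 ^ k) ∧
        tvDist D.dist M.dist ≤ ε := by
  intro ε hε
  obtain ⟨β, hβ⟩ :=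
    ((tendsto_tvDist_zero M.tendsto_dist_approxDBM).eventually_lt_const hε).exists
  refine ⟨_, M.approxDBM β, HBM.card_pattern_le hk, fun i => ?_, fun j => ?_, fun l => ?_, hβ.le⟩
  · rw [HBM.approxDBM, DBM.degVis_ofUnits]
    exact HBM.card_patterns_adj_le hk hdeg β _
  · rw [HBM.approxDBM, DBM.degMid_ofUnits]
    exact HBM.card_nodes_adj_le hk hdeg β _
  · rw [HBM.approxDBM, DBM.degDeep_ofUnits]
    exact HBM.card_patterns_adj_le hk hdeg β _
end

section
/- Let π be a probability distribution on {0,1}^k with π(x) > 0 for every x. Then for every ε > 0 there exist m ≤ 2^k, weight vectors w₁, …, w_m ∈ ℝ^k and biases c₁, …, c_m ∈ ℝ such that the function f(x) = ∏_{i=1}^m (1 + exp(w_i·x + c_i)) (the output of a Restricted Boltzmann Machine with k visible and m hidden nodes) satisfies ‖ f/∑_y f(y) − π ‖_TV ≤ ε. -/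
open scoped BigOperators

/-!
Index the hidden units by the configurations `z ∈ {0,1}^k` and give unit `z` the weights
`a (2z - 1)` and bias `a (1/2 - |z|) + log π(z)`, so that its factor in the output is
`1 + exp (a (1/2 - d(x, z))) π(z)`, `d` being the Hamming distance. After multiplying by
`exp (-a/2)`, the factor `z = x` tends to `π(x)` and every other factor to `1` as `a → ∞`;
normalisation ignores the scalar, so the RBM distribution tends to `π` pointwise, hence in
total variation.
-/

open Filter Topology Finset

namespace StoqPaper

section TotalVariation

variable {α β : Type*} [Fintype α] {l : Filter β}

theorem tendsto_tvDist_zero_s15 {p : β → α → ℝ} {q : α → ℝ}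
    (h : ∀ x, Tendsto (fun b => p b x) l (𝓝 (q x))) :
    Tendsto (fun b => tvDist (p b) q) l (𝓝 0) := by
  have := (tendsto_finsetSum univ fun x _ => ((h x).sub_const (q x)).abs).const_mul (1 / 2 : ℝ)
  simpa [tvDist] using this

theorem tendsto_div_sum {p : β → α → ℝ} {q : α → ℝ}
    (h : ∀ x, Tendsto (fun b => p b x) l (𝓝 (q x))) (hq : ∑ x, q x ≠ 0) (x : α) :
    Tendsto (fun b => p b x / ∑ y, p b y) l (𝓝 (q x / ∑ y, q y)) :=
  (h x).div (tendsto_finsetSum univ fun y _ => h y) hq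

theorem mul_div_sum_mul {c : ℝ} (hc : c ≠ 0) (f : α → ℝ) (x : α) :
    c * f x / ∑ y, c * f y = f x / ∑ y, f y := by
  rw [← mul_sum, mul_div_mul_left _ _ hc]

end TotalVariation

theorem sum_bv_sub_sum_bv_eq_neg_hammingDist {ι : Type*} [Fintype ι] (x z : ι → Bool) :
    ∑ j, (2 * bv (z j) - 1) * bv (x j) - ∑ j, bv (z j) = -(hammingDist x z : ℝ) := by
  classical
  rw [hammingDist, natCast_card_filter, ← sum_sub_distrib, ← sum_neg_distrib]
  refine sum_congr rfl fun j _ => ?_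
  cases x j <;> cases z j <;> norm_num [bv]

section RBM

variable {ι κ : Type*} [Fintype ι] [DecidableEq ι] [Fintype κ]

noncomputable def rbmOutput (w : κ → ι → ℝ) (c : κ → ℝ) (x : ι → Bool) : ℝ :=
  ∏ i, (1 + Real.exp (∑ j, w i j * bv (x j) + c i))

noncomputable def rbmDist (w : κ → ι → ℝ) (c : κ → ℝ) (x : ι → Bool) : ℝ :=
  rbmOutput w c x / ∑ y, rbmOutput w c y

theorem rbmDist_comp_equiv {κ' : Type*} [Fintype κ'] (e : κ' ≃ κ) (w : κ → ι → ℝ)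
    (c : κ → ℝ) : rbmDist (w ∘ e) (c ∘ e) = rbmDist w c := by
  have : rbmOutput (w ∘ e) (c ∘ e) = rbmOutput w c :=
    funext fun x => e.prod_comp fun i => 1 + Real.exp (∑ j, w i j * bv (x j) + c i)
  unfold rbmDist
  rw [this]

noncomputable def templateWeight (a : ℝ) (z : ι → Bool) (j : ι) : ℝ :=
  a * (2 * bv (z j) - 1)

noncomputable def templateBias (π : (ι → Bool) → ℝ) (a : ℝ) (z : ι → Bool) : ℝ :=
  a * (1 / 2 - ∑ j, bv (z j)) + Real.log (π z)

variable {π : (ι → Bool) → ℝ}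

theorem rbmOutput_template (hpos : ∀ x, 0 < π x) (a : ℝ) (x : ι → Bool) :
    rbmOutput (templateWeight a) (templateBias π a) x =
      ∏ z, (1 + Real.exp (a * (1 / 2 - hammingDist x z)) * π z) := by
  refine prod_congr rfl fun z _ => ?_
  have hexponent : ∑ j, templateWeight a z j * bv (x j) + templateBias π a z =
      a * (1 / 2 - hammingDist x z) + Real.log (π z) := by
    simp only [templateWeight, templateBias, mul_assoc, ← mul_sum]
    linear_combination a * sum_bv_sub_sum_bv_eq_neg_hammingDist x z
  rw [hexponent, Real.exp_add, Real.exp_log (hpos z)]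

theorem tendsto_exp_mul_rbmOutput_template (hpos : ∀ x, 0 < π x) (x : ι → Bool) :
    Tendsto (fun a => Real.exp (-(a / 2)) * rbmOutput (templateWeight a) (templateBias π a) x)
      atTop (𝓝 (π x)) := by
  have hdecay {d : ℝ} (hd : 1 ≤ d) :
      Tendsto (fun a : ℝ => Real.exp (a * (1 / 2 - d))) atTop (𝓝 0) :=
    Real.tendsto_exp_atBot.comp (tendsto_id.atTop_mul_const_of_neg (by linarith))
  have hfactor : Tendsto (fun a : ℝ => Real.exp (-(a / 2)) + π x) atTop (𝓝 (π x)) := by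
    simpa using (Real.tendsto_exp_neg_atTop_nhds_zero.comp
      (tendsto_id.atTop_div_const two_pos)).add_const (π x)
  have hothers : Tendsto (fun a : ℝ => ∏ z ∈ univ.erase x,
      (1 + Real.exp (a * (1 / 2 - hammingDist x z)) * π z)) atTop (𝓝 1) := by
    have hfactors : ∀ z ∈ univ.erase x, Tendsto
        (fun a : ℝ => 1 + Real.exp (a * (1 / 2 - hammingDist x z)) * π z) atTop (𝓝 1) := by
      intro z hz
      have hxz : 1 ≤ (hammingDist x z : ℝ) := by
        exact_mod_cast hammingDist_pos.mpr (ne_of_mem_erase hz).symm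
      simpa using ((hdecay hxz).mul_const (π z)).const_add 1
    simpa using tendsto_finsetProd _ hfactors
  refine (mul_one (π x) ▸ hfactor.mul hothers).congr fun a => ?_
  rw [rbmOutput_template hpos, ← mul_prod_erase univ _ (mem_univ x), hammingDist_self,
    ← mul_assoc]
  have hcancel : Real.exp (-(a / 2)) * Real.exp (a * (1 / 2 - ((0 : ℕ) : ℝ))) = 1 := by
    rw [← Real.exp_add, Nat.cast_zero]
    convert Real.exp_zero using 2
    ring
  rw [mul_add, mul_one, ← mul_assoc, hcancel, one_mul]

theorem tendsto_rbmDist_template (hpos : ∀ x, 0 < π x) (hsum : ∑ x, π x = 1)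
    (x : ι → Bool) :
    Tendsto (fun a => rbmDist (templateWeight a) (templateBias π a) x) atTop (𝓝 (π x)) := by
  have := tendsto_div_sum (tendsto_exp_mul_rbmOutput_template hpos) (hsum ▸ one_ne_zero) x
  simpa only [rbmDist, mul_div_sum_mul (Real.exp_ne_zero _), hsum, div_one] using this

end RBM

end StoqPaper

open StoqPaper
theorem statement_15 (k : ℕ) (π : ((Fin k) → Bool) → ℝ)
    (hpos : ∀ x, 0 < π x) (hsum : ∑ x, π x = 1) :
    ∀ ε : ℝ, 0 < ε →
      ∃ (m : ℕ), m ≤ 2 ^ k ∧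
        ∃ (w : Fin m → Fin k → ℝ) (c : Fin m → ℝ),
          ∀ f : ((Fin k) → Bool) → ℝ,
            f = (fun x => ∏ i, (1 + Real.exp ((∑ j, w i j * bv (x j)) + c i))) →
            tvDist (fun x => f x / ∑ y, f y) π ≤ ε := by
  intro ε hε
  have htv := tendsto_tvDist_zero_s15 (tendsto_rbmDist_template hpos hsum)
  obtain ⟨a, ha⟩ := (htv.eventually_le_const hε).exists
  let e : Fin (2 ^ k) ≃ (Fin k → Bool) := (Fintype.equivFinOfCardEq (by simp)).symm
  refine ⟨2 ^ k, le_rfl, templateWeight a ∘ e, templateBias π a ∘ e, ?_⟩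
  rintro f rfl
  change tvDist (rbmDist (templateWeight a ∘ e) (templateBias π a ∘ e)) π ≤ ε
  rwa [rbmDist_comp_equiv]
end

section
/- There is a universal constant C > 0 such that the following holds. Let H₁, …, H_L be complex square matrices of the same size with ‖H_i‖_op ≤ J for all i, let H = H₁ + ⋯ + H_L, and let δ > 0 satisfy δ L J ≤ 1. Then the second-order Trotter product satisfies ‖ e^(−δH_L/2) ⋯ e^(−δH₁/2) · e^(−δH₁/2) ⋯ e^(−δH_L/2) − e^(−δH) ‖_op ≤ C δ³ L³ J³. -/
open scoped BigOperators

/-!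
Expanding every exponential, a product `∏ exp aᵢ` equals `1 + ∑ aᵢ + Q + R`, where `Q` is its
degree-two part and the remainder `R` is dominated termwise by the corresponding remainder of the
scalar series in `s = ∑ ‖aᵢ‖`, so `‖R‖ ≤ eˢ - 1 - s - s²/2 = O(s³)`. For a palindromic word the
degree-two part is `Q = (∑ aᵢ)²/2`, which is also the degree-two part of `exp (∑ aᵢ)`; hence the
symmetric Trotter product agrees with `exp (-δH)` up to `O((δLJ)³)`.
-/

open NormedSpace (exp)
open Finset (range)
open scoped Nat

theorem Real.exp_sub_quadratic_le {s : ℝ} (h₀ : 0 ≤ s) (h₁ : s ≤ 1) :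
    Real.exp s - (1 + s + s ^ 2 / 2) ≤ s ^ 3 / 2 := by
  have := Real.exp_bound' h₀ h₁ (n := 3) (by norm_num)
  norm_num [Finset.sum_range_succ, Nat.factorial] at this
  nlinarith [pow_nonneg h₀ 3]

theorem List.norm_sum_le_sum_map_norm {E : Type*} [SeminormedAddCommGroup E] (l : List E) :
    ‖l.sum‖ ≤ (l.map norm).sum :=
  l.le_sum_of_subadditive norm norm_zero.le norm_add_le

namespace List

section Algebraic

variable {𝕂 A : Type*} [Field 𝕂] [Ring A] [Algebra 𝕂 A]

variable (𝕂) in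
/-- The degree-two part `∑_{i<j} aᵢ aⱼ + ½ ∑ aᵢ²` of `∏ exp aᵢ`. -/
def expQuadPart : List A → A
  | [] => 0
  | a :: l => (2⁻¹ : 𝕂) • a ^ 2 + a * l.sum + expQuadPart l

@[simp]
theorem expQuadPart_nil : expQuadPart 𝕂 ([] : List A) = 0 := rfl

@[simp]
theorem expQuadPart_cons (a : A) (l : List A) :
    expQuadPart 𝕂 (a :: l) = (2⁻¹ : 𝕂) • a ^ 2 + a * l.sum + expQuadPart 𝕂 l := rfl

theorem expQuadPart_append (l₁ l₂ : List A) :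
    expQuadPart 𝕂 (l₁ ++ l₂) = expQuadPart 𝕂 l₁ + l₁.sum * l₂.sum + expQuadPart 𝕂 l₂ := by
  induction l₁ with
  | nil => simp
  | cons a l ih =>
    simp only [cons_append, expQuadPart_cons, ih, sum_cons, sum_append, mul_add, add_mul]
    abel

variable [CharZero 𝕂]

theorem expQuadPart_add_expQuadPart_reverse (l : List A) :
    expQuadPart 𝕂 l + expQuadPart 𝕂 l.reverse = l.sum ^ 2 := by
  induction l with
  | nil => simp
  | cons a l ih =>
    have half : (2⁻¹ : 𝕂) • a ^ 2 + (2⁻¹ : 𝕂) • a ^ 2 = a ^ 2 := by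
      rw [← add_smul, ← two_mul, mul_inv_cancel₀ two_ne_zero, one_smul]
    rw [reverse_cons, expQuadPart_append, sum_reverse]
    simp only [expQuadPart_cons, expQuadPart_nil, sum_cons, sum_nil, add_zero, mul_zero]
    calc _ = ((2⁻¹ : 𝕂) • a ^ 2 + (2⁻¹ : 𝕂) • a ^ 2) + (a * l.sum + l.sum * a) +
          (expQuadPart 𝕂 l + expQuadPart 𝕂 l.reverse) := by abel
      _ = (a + l.sum) ^ 2 := by rw [half, ih]; noncomm_ring

theorem expQuadPart_of_reverse_eq {l : List A} (hl : l.reverse = l) :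
    expQuadPart 𝕂 l = (2⁻¹ : 𝕂) • l.sum ^ 2 := by
  rw [← expQuadPart_add_expQuadPart_reverse (𝕂 := 𝕂), hl, ← two_smul 𝕂, smul_smul,
    inv_mul_cancel₀ two_ne_zero, one_smul]

end Algebraic

section Normed

variable {𝕂 A : Type*} [RCLike 𝕂] [NormedRing A] [NormedAlgebra 𝕂 A]

theorem norm_expQuadPart_le (l : List A) :
    ‖expQuadPart 𝕂 l‖ ≤ (l.map norm).sum ^ 2 / 2 := by
  induction l with
  | nil => simp
  | cons a l ih =>
    have hsq : ‖(2⁻¹ : 𝕂) • a ^ 2‖ ≤ ‖a‖ ^ 2 / 2 := by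
      rw [norm_smul, norm_inv, RCLike.norm_ofNat, inv_mul_eq_div]
      gcongr
      exact norm_pow_le' a two_pos
    calc ‖expQuadPart 𝕂 (a :: l)‖
        ≤ ‖(2⁻¹ : 𝕂) • a ^ 2‖ + ‖a‖ * ‖l.sum‖ + ‖expQuadPart 𝕂 l‖ :=
          norm_add₃_le.trans (by gcongr; exact norm_mul_le _ _)
      _ ≤ ‖a‖ ^ 2 / 2 + ‖a‖ * (l.map norm).sum + (l.map norm).sum ^ 2 / 2 := by
          grw [hsq, norm_sum_le_sum_map_norm, ih]
      _ = ((a :: l).map norm).sum ^ 2 / 2 := by simp only [map_cons, sum_cons]; ring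

end Normed

end List

section BanachAlgebra

variable {𝕂 A : Type*} [RCLike 𝕂] [NormedRing A] [NormedAlgebra 𝕂 A] [NormOneClass A]
  [CompleteSpace A]

variable (𝕂) in
theorem norm_exp_sub_sum_range_le (x : A) (n : ℕ) :
    ‖exp x - ∑ k ∈ range n, (k !⁻¹ : 𝕂) • x ^ k‖ ≤
      Real.exp ‖x‖ - ∑ k ∈ range n, ‖x‖ ^ k / k ! := by
  have hA := (hasSum_nat_add_iff' n).2 (NormedSpace.exp_series_hasSum_exp' (𝕂 := 𝕂) x)
  have hR := (hasSum_nat_add_iff' n).2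
    (Real.exp_eq_exp_ℝ ▸ NormedSpace.expSeries_div_hasSum_exp ‖x‖)
  refine hA.norm_le_of_bounded hR fun k => ?_
  rw [norm_smul, norm_inv, RCLike.norm_natCast, inv_mul_eq_div]
  gcongr
  exact norm_pow_le x _

variable (𝕂) in
theorem norm_exp_sub_quadratic_le (x : A) :
    ‖exp x - (1 + x + (2⁻¹ : 𝕂) • x ^ 2)‖ ≤ Real.exp ‖x‖ - (1 + ‖x‖ + ‖x‖ ^ 2 / 2) := by
  simpa [Finset.sum_range_succ] using norm_exp_sub_sum_range_le 𝕂 x 3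

theorem List.norm_prod_map_exp_sub_quadratic_le (l : List A) :
    ‖(l.map exp).prod - (1 + l.sum + l.expQuadPart 𝕂)‖ ≤
      Real.exp (l.map norm).sum - (1 + (l.map norm).sum + (l.map norm).sum ^ 2 / 2) := by
  induction l with
  | nil => simp
  | cons a l ih =>
    set b := ‖a‖
    set σ := (l.map norm).sum
    have hσ : 0 ≤ σ := sum_nonneg (by simp)
    have hS : ‖l.sum‖ ≤ σ := l.norm_sum_le_sum_map_norm
    have hQ : ‖l.expQuadPart 𝕂‖ ≤ σ ^ 2 / 2 := l.norm_expQuadPart_le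
    have hP : ‖1 + l.sum + l.expQuadPart 𝕂‖ ≤ 1 + σ + σ ^ 2 / 2 :=
      norm_add₃_le.trans (by rw [norm_one]; gcongr)
    have hu : ‖(2⁻¹ : 𝕂) • a ^ 2‖ ≤ b ^ 2 / 2 := by
      simpa using [a].norm_expQuadPart_le (𝕂 := 𝕂)
    have hr := norm_exp_sub_quadratic_le 𝕂 a
    have hr₀ := (norm_nonneg _).trans hr
    have hE : ‖exp a‖ ≤ Real.exp b := by simpa using norm_exp_sub_sum_range_le 𝕂 a 0
    have split : ∀ E T u S Q : A, E * T - (1 + (a + S) + (u + a * S + Q)) =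
        E * (T - (1 + S + Q)) + (E - (1 + a + u)) * (1 + S + Q) + a * Q + u * S + u * Q := by
      intros; noncomm_ring
    rw [map_cons, prod_cons, sum_cons, expQuadPart_cons, split, map_cons, sum_cons]
    calc _ ≤ Real.exp b * (Real.exp σ - (1 + σ + σ ^ 2 / 2)) +
          (Real.exp b - (1 + b + b ^ 2 / 2)) * (1 + σ + σ ^ 2 / 2) + b * (σ ^ 2 / 2) +
          b ^ 2 / 2 * σ + b ^ 2 / 2 * (σ ^ 2 / 2) := by
          grw [norm_add_le, norm_add_le, norm_add_le, norm_add_le, norm_mul_le, norm_mul_le,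
            norm_mul_le, norm_mul_le, norm_mul_le, hE, ih, hr, hP, hQ, hS, hu]
      -- for commuting scalars the same splitting is an identity
      _ = _ := by rw [Real.exp_add]; ring

end BanachAlgebra

section Trotter

variable {A : Type*} [NormedRing A] [NormOneClass A] [CompleteSpace A]

theorem List.norm_prod_map_exp_sub_exp_sum_le_of_reverse_eq (𝕂 : Type*) [RCLike 𝕂]
    [NormedAlgebra 𝕂 A] (l : List A) (hl : l.reverse = l) (hs : (l.map norm).sum ≤ 1) :
    ‖(l.map exp).prod - exp l.sum‖ ≤ (l.map norm).sum ^ 3 := by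
  set s := (l.map norm).sum
  have hs₀ : 0 ≤ s := List.sum_nonneg (by simp)
  have hx : ‖l.sum‖ ≤ s := l.norm_sum_le_sum_map_norm
  calc ‖(l.map exp).prod - exp l.sum‖
      = ‖((l.map exp).prod - (1 + l.sum + l.expQuadPart 𝕂)) -
          (exp l.sum - (1 + l.sum + (2⁻¹ : 𝕂) • l.sum ^ 2))‖ := by
        rw [l.expQuadPart_of_reverse_eq hl]; congr 1; abel
    _ ≤ s ^ 3 / 2 + ‖l.sum‖ ^ 3 / 2 :=
        (norm_sub_le _ _).trans <| add_le_add
          (l.norm_prod_map_exp_sub_quadratic_le.trans (Real.exp_sub_quadratic_le hs₀ hs))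
          ((norm_exp_sub_quadratic_le 𝕂 _).trans
            (Real.exp_sub_quadratic_le (norm_nonneg _) (hx.trans hs)))
    _ ≤ s ^ 3 := by grw [hx]; linarith

theorem norm_symmetric_trotter_sub_exp_le (𝕂 : Type*) [RCLike 𝕂] [NormedAlgebra 𝕂 A] {L : ℕ}
    (H : Fin L → A) {J δ : ℝ} (hH : ∀ i, ‖H i‖ ≤ J) (hδ : 0 ≤ δ) (hδLJ : δ * L * J ≤ 1) :
    ‖(List.ofFn fun i => exp (((-(δ / 2) : ℝ) : 𝕂) • H i)).reverse.prod *
        (List.ofFn fun i => exp (((-(δ / 2) : ℝ) : 𝕂) • H i)).prod -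
        exp (((-δ : ℝ) : 𝕂) • ∑ i, H i)‖ ≤ (δ * L * J) ^ 3 := by
  set l := List.ofFn fun i => (((-(δ / 2) : ℝ) : 𝕂) • H i)
  have hprod : (List.ofFn fun i => exp (((-(δ / 2) : ℝ) : 𝕂) • H i)) = l.map exp := by
    simp [l, List.map_ofFn, Function.comp_def]
  have hsum : (l.reverse ++ l).sum = ((-δ : ℝ) : 𝕂) • ∑ i, H i := by
    rw [List.sum_append, List.sum_reverse, List.sum_ofFn, ← Finset.smul_sum, ← add_smul]
    push_cast; ring_nf
  have hnorm : ((l.reverse ++ l).map norm).sum ≤ δ * L * J := by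
    have hterm : ∀ i, ‖((-(δ / 2) : ℝ) : 𝕂) • H i‖ ≤ δ / 2 * J := fun i => by
      rw [norm_smul, RCLike.norm_ofReal, abs_neg, abs_of_nonneg (by positivity)]
      gcongr; exact hH i
    simp only [List.map_append, List.map_reverse, List.sum_append, List.sum_reverse, l,
      List.map_ofFn, List.sum_ofFn, Function.comp_apply]
    grw [Finset.sum_le_sum fun i _ => hterm i]
    simp only [Finset.sum_const, Finset.card_univ, Fintype.card_fin, nsmul_eq_mul]
    linarith
  have hpal : (l.reverse ++ l).reverse = l.reverse ++ l := by simp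
  rw [hprod, ← List.map_reverse, ← List.prod_append, ← List.map_append, ← hsum]
  refine (List.norm_prod_map_exp_sub_exp_sum_le_of_reverse_eq 𝕂 _ hpal
    (hnorm.trans hδLJ)).trans ?_
  gcongr
  exact List.sum_nonneg (by simp)

end Trotter

namespace StoqPaper

open scoped Matrix.Norms.L2Operator
open Matrix (toEuclideanCLM)

variable {n : Type*} [Fintype n]

theorem l2norm_eq_norm_toLp (v : n → ℂ) : l2norm v = ‖WithLp.toLp 2 v‖ := by
  simp [l2norm, EuclideanSpace.norm_eq, Complex.sq_norm]

theorem OpNormLE.of_isEmpty [IsEmpty n] (M : Matrix n n ℂ) (K : ℝ) : OpNormLE M K := by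
  simp [OpNormLE, l2norm]

variable [DecidableEq n]

theorem opNormLE_iff (M : Matrix n n ℂ) (K : ℝ) :
    OpNormLE M K ↔ ∀ x : EuclideanSpace ℂ n, ‖toEuclideanCLM (𝕜 := ℂ) M x‖ ≤ K * ‖x‖ := by
  simp only [OpNormLE, l2norm_eq_norm_toLp]
  exact ⟨fun h x => h x.ofLp, fun h v => h (WithLp.toLp 2 v)⟩

theorem OpNormLE.of_norm_le {M : Matrix n n ℂ} {K : ℝ} (h : ‖M‖ ≤ K) : OpNormLE M K :=
  (opNormLE_iff M K).2 fun x => ((toEuclideanCLM (𝕜 := ℂ) M).le_opNorm x).trans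
    (mul_le_mul_of_nonneg_right h (norm_nonneg x))

theorem OpNormLE.norm_le [Nonempty n] {M : Matrix n n ℂ} {K : ℝ} (h : OpNormLE M K) :
    ‖M‖ ≤ K := by
  rw [opNormLE_iff] at h
  obtain ⟨x, hx⟩ := exists_ne (0 : EuclideanSpace ℂ n)
  have hK : 0 ≤ K := nonneg_of_mul_nonneg_left ((norm_nonneg _).trans (h x)) (norm_pos_iff.2 hx)
  exact (toEuclideanCLM (𝕜 := ℂ) M).opNorm_le_bound hK h

end StoqPaper

open StoqPaper
theorem statement_17 :
    ∃ C : ℝ, 0 < C ∧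
      ∀ (d L : ℕ) (J δ : ℝ) (H : Fin L → Matrix (Fin d) (Fin d) ℂ),
        (∀ i, OpNormLE (H i) J) → 0 < δ → δ * L * J ≤ 1 →
        OpNormLE
          ((List.ofFn (fun i => NormedSpace.exp (((-(δ / 2) : ℝ) : ℂ) • H i))).reverse.prod *
            (List.ofFn (fun i => NormedSpace.exp (((-(δ / 2) : ℝ) : ℂ) • H i))).prod -
            NormedSpace.exp (((-δ : ℝ) : ℂ) • ∑ i, H i))
          (C * δ ^ 3 * L ^ 3 * J ^ 3) := by
  refine ⟨1, one_pos, fun d L J δ H hH hδ hδLJ => ?_⟩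
  rcases isEmpty_or_nonempty (Fin d) with hd | hd
  · exact OpNormLE.of_isEmpty _ _
  rw [one_mul, ← mul_pow, ← mul_pow]
  open scoped Matrix.Norms.L2Operator in
  exact OpNormLE.of_norm_le
    (norm_symmetric_trotter_sub_exp_le ℂ H (fun i => (hH i).norm_le) hδ.le hδLJ)
end
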